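/- arXiv:1911.01113 — 11 statements merged into one kernel-verified Lean document; each statement's English description precedes it below -/
import Mathlib

section
/- If μ is an eigenvalue of a real symmetric n×n matrix A partitioned as [[A_S, Bᵀ],[B, C]] where S indexes the first k rows, then S is a star set for μ (i.e., the projections of the coordinate vectors indexed by S onto the μ-eigenspace form a basis of that eigenspace) if and only if μ is not an eigenvalue of C and μI − A_S = Bᵀ(μI − C)⁻¹B. -/
/-!
For `v` in `K` we have `⟪P e_u, v⟫ = v_u`, and `∑ c_u P e_u = P (∑ c_u e_u)`. Hence the projections
`P e_u` span `K` iff no nonzero `v ∈ K` vanishes on `S`, and they are linearly independent iff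
no nonzero vector supported on `S` lies in `Kᗮ`. With `K = ker M` for `M = μI - A`, we have
`Kᗮ = range M` since `M` is symmetric, so both conditions become statements about the blocks of
`M`: no nonzero `y` has `Bᵀ y = 0` and `(μI - C) y = 0`, and `B x = (μI - C) y` forces
`(μI - A_S) x = Bᵀ y`. Taking `x = 0` in the second shows that `μI - C` is invertible, after
which the second says exactly that the Schur complement `μI - A_S - Bᵀ (μI - C)⁻¹ B` vanishes.
-/

open Matrix

open scoped InnerProductSpace

namespace Submodule

variable {𝕜 E ι : Type*} [RCLike 𝕜] [NormedAddCommGroup E] [InnerProductSpace 𝕜 E]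
  {K : Submodule 𝕜 E} {e p : ι → E}

theorem sum_smul_eq_zero_iff_sum_smul_mem_orthogonal [Fintype ι] (hp : ∀ i, p i ∈ K)
    (hep : ∀ i, e i - p i ∈ Kᗮ) (c : ι → 𝕜) :
    ∑ i, c i • p i = 0 ↔ ∑ i, c i • e i ∈ Kᗮ := by
  have hpK : ∑ i, c i • p i ∈ K := sum_mem fun i _ => smul_mem _ _ (hp i)
  have hdiff : ∑ i, c i • (e i - p i) ∈ Kᗮ := sum_mem fun i _ => smul_mem _ _ (hep i)
  have hsplit : ∑ i, c i • e i = ∑ i, c i • (e i - p i) + ∑ i, c i • p i := by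
    simp only [smul_sub, Finset.sum_sub_distrib, sub_add_cancel]
  rw [hsplit, Submodule.add_mem_iff_right _ hdiff]
  exact ⟨fun h => h ▸ zero_mem _, fun h => disjoint_def.1 K.orthogonal_disjoint _ hpK h⟩

theorem linearIndependent_iff_of_sub_mem_orthogonal [Fintype ι] (hp : ∀ i, p i ∈ K)
    (hep : ∀ i, e i - p i ∈ Kᗮ) :
    LinearIndependent 𝕜 p ↔ ∀ c : ι → 𝕜, ∑ i, c i • e i ∈ Kᗮ → c = 0 := by
  simp only [Fintype.linearIndependent_iff, ← sum_smul_eq_zero_iff_sum_smul_mem_orthogonal hp hep,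
    funext_iff, Pi.zero_apply]

theorem span_range_eq_iff_of_sub_mem_orthogonal [FiniteDimensional 𝕜 E] (hp : ∀ i, p i ∈ K)
    (hep : ∀ i, e i - p i ∈ Kᗮ) :
    span 𝕜 (Set.range p) = K ↔ ∀ v ∈ K, (∀ i, ⟪e i, v⟫_𝕜 = 0) → v = 0 := by
  have hinner : ∀ i, ∀ v ∈ K, ⟪p i, v⟫_𝕜 = ⟪e i, v⟫_𝕜 := fun i v hv => by
    rw [eq_comm, ← sub_eq_zero, ← inner_sub_left, inner_left_of_mem_orthogonal hv (hep i)]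
  constructor
  · rintro hspan v hv he
    have hle : span 𝕜 (Set.range p) ≤ (𝕜 ∙ v)ᗮ := span_le.2 <| by
      rintro _ ⟨i, rfl⟩
      rw [SetLike.mem_coe, mem_orthogonal_singleton_iff_inner_right, inner_eq_zero_symm,
        hinner i v hv, he i]
    exact inner_self_eq_zero.1 <| mem_orthogonal_singleton_iff_inner_right.1 <|
      hle (hspan ▸ hv)
  · intro h
    have hle : span 𝕜 (Set.range p) ≤ K := span_le.2 <| Set.range_subset_iff.2 hp
    have hbot : (span 𝕜 (Set.range p))ᗮ ⊓ K = ⊥ := eq_bot_iff.2 fun v ⟨hvp, hvK⟩ =>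
      h v hvK fun i => hinner i v hvK ▸ hvp _ (subset_span ⟨i, rfl⟩)
    simpa [hbot] using sup_orthogonal_inf_of_hasOrthogonalProjection hle

theorem exists_projection_basis_iff [Fintype ι] [FiniteDimensional 𝕜 E] :
    (∃ p : ι → E, (∀ i, p i ∈ K ∧ e i - p i ∈ Kᗮ) ∧
        LinearIndependent 𝕜 p ∧ span 𝕜 (Set.range p) = K) ↔
      (∀ v ∈ K, (∀ i, ⟪e i, v⟫_𝕜 = 0) → v = 0) ∧
        ∀ c : ι → 𝕜, ∑ i, c i • e i ∈ Kᗮ → c = 0 := by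
  constructor
  · rintro ⟨p, hpe, hli, hspan⟩
    have hp i := (hpe i).1
    have hep i := (hpe i).2
    exact ⟨(span_range_eq_iff_of_sub_mem_orthogonal hp hep).1 hspan,
      (linearIndependent_iff_of_sub_mem_orthogonal hp hep).1 hli⟩
  · rintro ⟨hspan, hli⟩
    have hp i : K.starProjection (e i) ∈ K := K.starProjection_apply_mem (e i)
    have hep i : e i - K.starProjection (e i) ∈ Kᗮ := K.sub_starProjection_mem_orthogonal (e i)
    exact ⟨fun i => K.starProjection (e i), fun i => ⟨hp i, hep i⟩,
      (linearIndependent_iff_of_sub_mem_orthogonal hp hep).2 hli,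
      (span_range_eq_iff_of_sub_mem_orthogonal hp hep).2 hspan⟩

end Submodule

theorem EuclideanSpace.exists_projection_basis_single_inl_iff {𝕜 m n : Type*} [RCLike 𝕜]
    [Fintype m] [Fintype n] [DecidableEq m] [DecidableEq n]
    {K : Submodule 𝕜 (EuclideanSpace 𝕜 (m ⊕ n))} :
    (∃ p : m → EuclideanSpace 𝕜 (m ⊕ n),
        (∀ u, p u ∈ K ∧ EuclideanSpace.single (Sum.inl u) (1 : 𝕜) - p u ∈ Kᗮ) ∧
        LinearIndependent 𝕜 p ∧ Submodule.span 𝕜 (Set.range p) = K) ↔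
      (∀ v ∈ K, (∀ u, v (Sum.inl u) = 0) → v = 0) ∧
        ∀ x, WithLp.toLp 2 (Sum.elim x (0 : n → 𝕜)) ∈ Kᗮ → x = 0 := by
  have hsum (x : m → 𝕜) :
      ∑ u, x u • EuclideanSpace.single (Sum.inl u) (1 : 𝕜) = WithLp.toLp 2 (Sum.elim x (0 : n → 𝕜)) := by
    ext (u | j) <;> simp [Pi.single_apply]
  simp only [Submodule.exists_projection_basis_iff, EuclideanSpace.inner_single_left, map_one,
    one_mul, hsum]

namespace Matrix

section Field

variable {m n F : Type*} [Fintype m] [Fintype n] [DecidableEq n] [Field F]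

theorem isUnit_det_smul_one_sub_iff {C : Matrix n n F} {μ : F} :
    IsUnit (μ • 1 - C).det ↔ ¬∃ w, w ≠ 0 ∧ C *ᵥ w = μ • w := by
  rw [isUnit_iff_ne_zero, ne_eq, ← exists_mulVec_eq_zero_iff]
  simp only [sub_mulVec, smul_mulVec, one_mulVec, sub_eq_zero, eq_comm]

theorem isUnit_det_and_eq_mul_inv_mul_iff {P : Matrix m m F} {Q : Matrix m n F}
    {R : Matrix n m F} {D : Matrix n n F} :
    IsUnit D.det ∧ P = Q * D⁻¹ * R ↔
      (∀ y, Q *ᵥ y = 0 → D *ᵥ y = 0 → y = 0) ∧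
        ∀ x y, R *ᵥ x + D *ᵥ y = 0 → P *ᵥ x + Q *ᵥ y = 0 := by
  have hsolve (hD : IsUnit D.det) (x y) : R *ᵥ x + D *ᵥ y = 0 ↔ y = -(D⁻¹ *ᵥ R *ᵥ x) := by
    constructor
    · intro h
      rw [← mulVec_neg, ← eq_neg_of_add_eq_zero_right h, mulVec_mulVec, nonsing_inv_mul _ hD,
        one_mulVec]
    · rintro rfl
      rw [mulVec_neg, mulVec_mulVec, mul_nonsing_inv _ hD, one_mulVec, add_neg_cancel]
  constructor
  · rintro ⟨hD, rfl⟩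
    refine ⟨fun y _ hy => ?_, fun x y h => ?_⟩
    · simpa [hy] using (hsolve hD 0 y).1 (by simpa using hy)
    · rw [(hsolve hD x y).1 h, mulVec_neg, ← mulVec_mulVec, ← mulVec_mulVec, add_neg_cancel]
  · rintro ⟨hker, hrange⟩
    have hD : IsUnit D.det := isUnit_iff_ne_zero.2 fun h => by
      obtain ⟨y, hy0, hy⟩ := exists_mulVec_eq_zero_iff.2 h
      exact hy0 (hker y (by simpa using hrange 0 y (by simpa using hy)) hy)
    refine ⟨hD, ext_iff_mulVec.2 fun x => ?_⟩
    have := hrange x _ ((hsolve hD x _).2 rfl)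
    rwa [mulVec_neg, add_neg_eq_zero, mulVec_mulVec, mulVec_mulVec] at this

end Field

theorem mem_ker_toEuclideanLin_iff {m n 𝕜 : Type*} [RCLike 𝕜] [Fintype n] [DecidableEq n]
    {M : Matrix m n 𝕜} {v : EuclideanSpace 𝕜 n} :
    v ∈ LinearMap.ker (toEuclideanLin M) ↔ M *ᵥ v.ofLp = 0 := by
  rw [LinearMap.mem_ker, toLpLin_apply, WithLp.toLp_eq_zero]

section Blocks

variable {m n 𝕜 : Type*} [Fintype m] [Fintype n] [DecidableEq m] [DecidableEq n] [RCLike 𝕜]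
  {P : Matrix m m 𝕜} {Q : Matrix m n 𝕜} {R : Matrix n m 𝕜} {D : Matrix n n 𝕜}

theorem forall_mem_ker_fromBlocks_iff :
    (∀ v ∈ LinearMap.ker (toEuclideanLin (fromBlocks P Q R D)),
        (∀ u, v (Sum.inl u) = 0) → v = 0) ↔
      ∀ y, Q *ᵥ y = 0 → D *ᵥ y = 0 → y = 0 := by
  simp only [mem_ker_toEuclideanLin_iff]
  constructor
  · intro h y hQ hD
    have := h (WithLp.toLp 2 (Sum.elim 0 y)) (by simp [fromBlocks_mulVec, hQ, hD]) fun _ => rfl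
    exact funext fun j => congrArg (· (Sum.inr j)) this
  · intro h v hv hinl
    have hv0 : v.ofLp ∘ Sum.inl = 0 := funext hinl
    rw [fromBlocks_mulVec, hv0, ← Sum.elim_zero_zero, Sum.elim_eq_iff] at hv
    have hy := h _ (by simpa using hv.1) (by simpa using hv.2)
    ext (u | j)
    · exact hinl u
    · exact congrFun hy j

theorem forall_mem_orthogonal_ker_fromBlocks_iff (hM : (fromBlocks P Q R D).IsHermitian) :
    (∀ x, WithLp.toLp 2 (Sum.elim x (0 : n → 𝕜)) ∈
        (LinearMap.ker (toEuclideanLin (fromBlocks P Q R D)))ᗮ → x = 0) ↔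
      ∀ x y, R *ᵥ x + D *ᵥ y = 0 → P *ᵥ x + Q *ᵥ y = 0 := by
  rw [← (isSymmetric_toEuclideanLin_iff.2 hM).orthogonal_range, Submodule.orthogonal_orthogonal]
  simp only [LinearMap.mem_range, toLpLin_apply]
  constructor
  · intro h x y hxy
    exact h _ ⟨WithLp.toLp 2 (Sum.elim x y), by simp [fromBlocks_mulVec, hxy]⟩
  · rintro h x ⟨z, hz⟩
    rw [(WithLp.toLp_injective 2).eq_iff, fromBlocks_mulVec, Sum.elim_eq_iff] at hz
    exact hz.1 ▸ h _ _ hz.2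

end Blocks

end Matrix

theorem reconstruction_theorem_general {k t : ℕ}
    (AS : Matrix (Fin k) (Fin k) ℝ) (B : Matrix (Fin t) (Fin k) ℝ)
    (C : Matrix (Fin t) (Fin t) ℝ)
    (A : Matrix (Fin k ⊕ Fin t) (Fin k ⊕ Fin t) ℝ)
    (hA : A = Matrix.fromBlocks AS Bᵀ B C)
    (hsymm : A.IsSymm)
    (μ : ℝ)
    (K : Submodule ℝ (EuclideanSpace ℝ (Fin k ⊕ Fin t)))
    (hK : ∀ v : EuclideanSpace ℝ (Fin k ⊕ Fin t), v ∈ K ↔ A.mulVec v = μ • v) :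
    (∃ p : Fin k → EuclideanSpace ℝ (Fin k ⊕ Fin t),
        (∀ u, p u ∈ K ∧ EuclideanSpace.single (Sum.inl u) (1 : ℝ) - p u ∈ Kᗮ) ∧
        LinearIndependent ℝ p ∧ Submodule.span ℝ (Set.range p) = K)
      ↔
    ((¬ ∃ w : Fin t → ℝ, w ≠ 0 ∧ C.mulVec w = μ • w) ∧
      μ • (1 : Matrix (Fin k) (Fin k) ℝ) - AS =
        Bᵀ * (μ • (1 : Matrix (Fin t) (Fin t) ℝ) - C)⁻¹ * B) := by
  have hblocks : μ • 1 - A = fromBlocks (μ • 1 - AS) (-Bᵀ) (-B) (μ • 1 - C) := by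
    rw [hA, ← fromBlocks_one, fromBlocks_smul, sub_eq_add_neg, fromBlocks_neg, fromBlocks_add]
    simp [sub_eq_add_neg]
  have hherm : (fromBlocks (μ • 1 - AS) (-Bᵀ) (-B) (μ • 1 - C)).IsHermitian :=
    hblocks ▸ isHermitian_iff_isSymm.2 ((isSymm_one.smul μ).sub hsymm)
  obtain rfl : K = LinearMap.ker (toEuclideanLin (μ • 1 - A)) := by
    ext v
    rw [hK, mem_ker_toEuclideanLin_iff, sub_mulVec, smul_mulVec, one_mulVec, sub_eq_zero, eq_comm]
  rw [EuclideanSpace.exists_projection_basis_single_inl_iff, hblocks,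
    forall_mem_ker_fromBlocks_iff, forall_mem_orthogonal_ker_fromBlocks_iff hherm,
    ← isUnit_det_and_eq_mul_inv_mul_iff, isUnit_det_smul_one_sub_iff, Matrix.neg_mul, Matrix.mul_neg, Matrix.neg_mul, neg_neg]

theorem reconstruction_theorem {k t : ℕ}
    (AS : Matrix (Fin k) (Fin k) ℝ) (B : Matrix (Fin t) (Fin k) ℝ)
    (C : Matrix (Fin t) (Fin t) ℝ)
    (A : Matrix (Fin k ⊕ Fin t) (Fin k ⊕ Fin t) ℝ)
    (hA : A = Matrix.fromBlocks AS Bᵀ B C)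
    (hsymm : A.IsSymm)
    (hentries : ∀ p q, A p q ∈ ({0, 1, -1} : Set ℝ))
    (hdiag : ∀ p, A p p = 0)
    (μ : ℝ)
    (hμ : ∃ v : (Fin k ⊕ Fin t) → ℝ, v ≠ 0 ∧ A.mulVec v = μ • v)
    (K : Submodule ℝ (EuclideanSpace ℝ (Fin k ⊕ Fin t)))
    (hK : ∀ v : EuclideanSpace ℝ (Fin k ⊕ Fin t), v ∈ K ↔ A.mulVec v = μ • v) :
    (∃ p : Fin k → EuclideanSpace ℝ (Fin k ⊕ Fin t),
        (∀ u, p u ∈ K ∧ EuclideanSpace.single (Sum.inl u) (1 : ℝ) - p u ∈ Kᗮ) ∧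
        LinearIndependent ℝ p ∧ Submodule.span ℝ (Set.range p) = K)
      ↔
    ((¬ ∃ w : Fin t → ℝ, w ≠ 0 ∧ C.mulVec w = μ • w) ∧
      μ • (1 : Matrix (Fin k) (Fin k) ℝ) - AS =
        Bᵀ * (μ • (1 : Matrix (Fin t) (Fin t) ℝ) - C)⁻¹ * B) :=
  reconstruction_theorem_general AS B C A hA hsymm μ K hK
end

section
/- Let Σ be a signed graph with eigenvalue μ ∉ {0,1,−1} and star set S. Then any two distinct vertices of S have distinct columns in the block B, i.e., distinct signed neighbourhoods in the star complement. -/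
open Matrix

theorem star_set_vertices_have_distinct_neighbourhoods {k t : ℕ}
    (AS : Matrix (Fin k) (Fin k) ℝ) (B : Matrix (Fin t) (Fin k) ℝ)
    (C : Matrix (Fin t) (Fin t) ℝ)
    (A : Matrix (Fin k ⊕ Fin t) (Fin k ⊕ Fin t) ℝ)
    (hA : A = Matrix.fromBlocks AS Bᵀ B C)
    (hsymm : A.IsSymm)
    (hentries : ∀ p q, A p q ∈ ({0, 1, -1} : Set ℝ))
    (hdiag : ∀ p, A p p = 0)
    (μ : ℝ) (hμ : μ ∉ ({0, 1, -1} : Set ℝ))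
    (hC : ¬ ∃ w : Fin t → ℝ, w ≠ 0 ∧ C.mulVec w = μ • w)
    (hrec : μ • (1 : Matrix (Fin k) (Fin k) ℝ) - AS =
      Bᵀ * (μ • (1 : Matrix (Fin t) (Fin t) ℝ) - C)⁻¹ * B) :
    ∀ u v : Fin k, u ≠ v → (fun i : Fin t => B i u) ≠ (fun i : Fin t => B i v) := by
  intro u v huv heq
  have hcol : ∀ i, B i u = B i v := fun i => congrFun heq i
  have h1 := congrFun (congrFun hrec u) u
  have h2 := congrFun (congrFun hrec u) v
  set M := (μ • (1 : Matrix (Fin t) (Fin t) ℝ) - C)⁻¹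
  have hRHS : (Bᵀ * M * B) u u = (Bᵀ * M * B) u v := by
    simp only [Matrix.mul_apply]
    exact Finset.sum_congr rfl fun j _ => by rw [hcol j]
  have hASuu : AS u u = 0 := by
    have := hdiag (Sum.inl u)
    simpa [hA, Matrix.fromBlocks_apply₁₁] using this
  have hASuv : AS u v ∈ ({0, 1, -1} : Set ℝ) := by
    have := hentries (Sum.inl u) (Sum.inl v)
    simpa [hA, Matrix.fromBlocks_apply₁₁] using this
  have hL1 : (μ • (1 : Matrix (Fin k) (Fin k) ℝ) - AS) u u = μ := by
    simp [Matrix.sub_apply, Matrix.smul_apply, Matrix.one_apply, hASuu]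
  have hL2 : (μ • (1 : Matrix (Fin k) (Fin k) ℝ) - AS) u v = -AS u v := by
    simp [Matrix.sub_apply, Matrix.smul_apply, Matrix.one_apply, huv]
  have hkey : μ = -AS u v := by rw [← hL1, ← hL2, h1, h2, hRHS]
  rcases hASuv with h | h | h <;> rw [h] at hkey <;>
    simp_all [Set.mem_insert_iff]
end

section
/- Let Σ be a signed graph with eigenvalue μ ∉ {0,1,−1} of multiplicity k, and let t = n − k where n is the number of vertices. Then k ≤ 3^t − 1, i.e., n ≤ 3^t + t − 1. -/
open Matrix

theorem exponential_bound_on_order {n : ℕ}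
    (A : Matrix (Fin n) (Fin n) ℝ)
    (hsymm : A.IsSymm)
    (hentries : ∀ p q, A p q ∈ ({0, 1, -1} : Set ℝ))
    (hdiag : ∀ p, A p p = 0)
    (μ : ℝ) (hμ : μ ∉ ({0, 1, -1} : Set ℝ))
    (heig : Module.End.HasEigenvalue (Matrix.toLin' A) μ)
    (k : ℕ) (hk : k = Module.finrank ℝ (Module.End.eigenspace (Matrix.toLin' A) μ))
    (t : ℕ) (ht : t = n - k) :
    k ≤ 3 ^ t - 1 ∧ n ≤ 3 ^ t + t - 1 := by
  classical
  -- dispose of n = 0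
  rcases Nat.eq_zero_or_pos n with hn | hn
  · exfalso
    subst hn
    exact heig (Subsingleton.elim _ _)
  haveI : NeZero n := ⟨hn.ne'⟩
  set M : Matrix (Fin n) (Fin n) ℝ := A - μ • 1 with hM
  have hMsymm : ∀ p q, M p q = M q p := by
    intro p q
    simp only [hM, Matrix.sub_apply, Matrix.smul_apply, Matrix.one_apply, smul_eq_mul]
    rw [hsymm.apply q p]
    by_cases h : p = q
    · subst h; rfl
    · rw [if_neg h, if_neg (Ne.symm h)]
  have hMdiag : ∀ p, M p p = -μ := by
    intro p
    simp [hM, Matrix.one_apply, hdiag p]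
  have hMoff : ∀ p q, p ≠ q → M p q = A p q := by
    intro p q h
    simp [hM, Matrix.one_apply, h]
  -- kernel of M is the eigenspace
  have hker : LinearMap.ker (Matrix.toLin' M) = Module.End.eigenspace (Matrix.toLin' A) μ := by
    ext x
    rw [LinearMap.mem_ker, Module.End.mem_eigenspace_iff]
    rw [Matrix.toLin'_apply, Matrix.toLin'_apply, hM, Matrix.sub_mulVec, sub_eq_zero,
      Matrix.smul_mulVec, Matrix.one_mulVec]
  have hkn : k ≤ n := by
    rw [hk]
    calc Module.finrank ℝ (Module.End.eigenspace (Matrix.toLin' A) μ)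
        ≤ Module.finrank ℝ (Fin n → ℝ) := Submodule.finrank_le _
      _ = n := by simp [Module.finrank_fintype_fun_eq_card]
  -- rows of M
  set R : Fin n → (Fin n → ℝ) := fun p => M p with hR
  have hcol : ∀ p, M *ᵥ Pi.single p 1 = R p := by
    intro p
    funext q
    simp [Matrix.mulVec_single, hMsymm p q, hR]
  have hVeq : LinearMap.range (Matrix.toLin' M) = Submodule.span ℝ (Set.range R) := by
    apply le_antisymm
    · rintro _ ⟨x, rfl⟩
      rw [Matrix.toLin'_apply]
      have hx : M *ᵥ x = ∑ p, x p • R p := by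
        funext q
        simp only [Matrix.mulVec, dotProduct, Finset.sum_apply, Pi.smul_apply,
          smul_eq_mul, hR]
        exact Finset.sum_congr rfl fun p _ => by rw [hMsymm q p]; ring
      rw [hx]
      exact Submodule.sum_mem _ fun p _ =>
        Submodule.smul_mem _ _ (Submodule.subset_span ⟨p, rfl⟩)
    · rw [Submodule.span_le]
      rintro _ ⟨p, rfl⟩
      exact ⟨Pi.single p 1, by rw [Matrix.toLin'_apply, hcol]⟩
  have hrank : Module.finrank ℝ (LinearMap.range (Matrix.toLin' M)) = t := by
    have h1 := LinearMap.finrank_range_add_finrank_ker (Matrix.toLin' M)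
    rw [hker, ← hk] at h1
    have hfr : Module.finrank ℝ (Fin n → ℝ) = n := by
      simp [Module.finrank_fintype_fun_eq_card]
    rw [hfr] at h1
    omega
  -- extract a linearly independent spanning subset of the rows
  obtain ⟨b, hbsub, hbspan, hbind⟩ := exists_linearIndependent ℝ (Set.range R)
  have hbfin : b.Finite := hbind.setFinite
  haveI : Fintype b := hbfin.fintype
  have hbcard : b.toFinset.card = t := by
    rw [← finrank_span_set_eq_card hbind, hbspan, ← hVeq, hrank]
  -- choose preimage indices
  have hex : ∀ v ∈ b, ∃ p, R p = v := fun v hv => hbsub hv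
  choose! f hf using hex
  set S : Finset (Fin n) := b.toFinset.image f with hS
  have hScard : S.card ≤ t := by
    calc S.card ≤ b.toFinset.card := Finset.card_image_le
      _ = t := hbcard
  -- separation property: a vector in the column space vanishing on S is zero
  have hsep : ∀ x : Fin n → ℝ, (∀ q ∈ S, (M *ᵥ x) q = 0) → M *ᵥ x = 0 := by
    intro x hx
    let φ : (Fin n → ℝ) →ₗ[ℝ] ℝ :=
      { toFun := fun r => r ⬝ᵥ x
        map_add' := fun r s => add_dotProduct r s x
        map_smul' := fun c r => smul_dotProduct c r x }
    have hφrow : ∀ p, (M *ᵥ x) p = φ (R p) := fun p => rfl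
    have hb0 : b ⊆ (LinearMap.ker φ : Set (Fin n → ℝ)) := by
      intro v hv
      have hfv : f v ∈ S := Finset.mem_image.2 ⟨v, Set.mem_toFinset.2 hv, rfl⟩
      have : φ (R (f v)) = 0 := by rw [← hφrow]; exact hx _ hfv
      rw [hf v hv] at this
      exact this
    have hble : Submodule.span ℝ b ≤ LinearMap.ker φ := Submodule.span_le.2 hb0
    have hall : ∀ p, φ (R p) = 0 := by
      intro p
      have : R p ∈ Submodule.span ℝ (Set.range R) := Submodule.subset_span ⟨p, rfl⟩
      rw [← hbspan] at this
      exact hble this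
    funext p
    rw [hφrow]
    exact hall p
  -- the neighbourhood map
  set φm : Fin n → ({q // q ∈ S} → ℝ) := fun p => fun q => A q.1 p with hφm
  set T : Finset ({q // q ∈ S} → ℝ) := Fintype.piFinset (fun _ => ({0, 1, -1} : Finset ℝ))
    with hT
  have hTcard : T.card = 3 ^ S.card := by
    have h3 : ({0, 1, -1} : Finset ℝ).card = 3 := by norm_num
    rw [hT, Fintype.card_piFinset]
    simp [h3, Fintype.card_coe]
  have h0T : (0 : {q // q ∈ S} → ℝ) ∈ T := by
    rw [hT, Fintype.mem_piFinset]
    intro q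
    simp
  -- the map lands in nonzero sign vectors
  have hmaps : ∀ p ∈ Sᶜ, φm p ∈ T.erase 0 := by
    intro p hp
    have hpS : p ∉ S := Finset.mem_compl.1 hp
    refine Finset.mem_erase.2 ⟨?_, ?_⟩
    · intro h0
      have hz : ∀ q ∈ S, (M *ᵥ Pi.single p 1) q = 0 := by
        intro q hq
        have hqp : q ≠ p := fun h => hpS (h ▸ hq)
        rw [hcol p]
        have : R p q = A q p := by
          show M p q = A q p
          rw [hMsymm p q, hMoff q p hqp]
        rw [this]
        have := congrFun h0 ⟨q, hq⟩
        simpa [hφm] using this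
      have := hsep _ hz
      rw [hcol p] at this
      have hpp := congrFun this p
      have : M p p = 0 := hpp
      rw [hMdiag p] at this
      exact hμ (by left; linarith)
    · rw [hT, Fintype.mem_piFinset]
      intro q
      have := hentries q.1 p
      simp only [Set.mem_insert_iff, Set.mem_singleton_iff] at this
      simp only [hφm, Finset.mem_insert, Finset.mem_singleton]
      tauto
  -- injectivity
  have hinj : Set.InjOn φm (Sᶜ : Finset (Fin n)) := by
    intro p1 hp1 p2 hp2 heq
    by_contra hne
    have hp1S : p1 ∉ S := Finset.mem_compl.1 hp1
    have hp2S : p2 ∉ S := Finset.mem_compl.1 hp2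
    set x : Fin n → ℝ := Pi.single p1 1 - Pi.single p2 1 with hx
    have hMx : M *ᵥ x = R p1 - R p2 := by
      rw [hx, Matrix.mulVec_sub, hcol, hcol]
    have hz : ∀ q ∈ S, (M *ᵥ x) q = 0 := by
      intro q hq
      have hq1 : q ≠ p1 := fun h => hp1S (h ▸ hq)
      have hq2 : q ≠ p2 := fun h => hp2S (h ▸ hq)
      rw [hMx]
      have e1 : R p1 q = A q p1 := by show M p1 q = A q p1; rw [hMsymm p1 q, hMoff q p1 hq1]
      have e2 : R p2 q = A q p2 := by show M p2 q = A q p2; rw [hMsymm p2 q, hMoff q p2 hq2]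
      have := congrFun heq ⟨q, hq⟩
      simp only [hφm] at this
      simp [e1, e2, this]
    have h0 := hsep _ hz
    rw [hMx, sub_eq_zero] at h0
    have hpp := congrFun h0 p1
    have : M p1 p1 = M p2 p1 := hpp
    rw [hMdiag p1, hMoff p2 p1 (Ne.symm hne)] at this
    have hent := hentries p2 p1
    simp only [Set.mem_insert_iff, Set.mem_singleton_iff] at hent
    apply hμ
    simp only [Set.mem_insert_iff, Set.mem_singleton_iff]
    rcases hent with h | h | h
    · left; rw [h] at this; linarith
    · right; right; rw [h] at this; linarith
    · right; left; rw [h] at this; linarith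
  have hcount : (Sᶜ : Finset (Fin n)).card ≤ (T.erase 0).card :=
    Finset.card_le_card_of_injOn φm hmaps hinj
  have hcompl : (Sᶜ : Finset (Fin n)).card = n - S.card := by
    rw [Finset.card_compl]
    simp
  have herase : (T.erase 0).card = 3 ^ S.card - 1 := by
    rw [Finset.card_erase_of_mem h0T, hTcard]
  have hpowle : 3 ^ S.card ≤ 3 ^ t := Nat.pow_le_pow_right (by norm_num) hScard
  have hpow1 : 1 ≤ 3 ^ S.card := Nat.one_le_pow _ _ (by norm_num)
  rw [hcompl, herase] at hcount
  constructor <;> omega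
end

section
/- Let μ be an eigenvalue of the symmetric matrix A = [[A_S, Bᵀ],[B, C]] with S a star set of size k, t = n − k, μ not an eigenvalue of C. Define the n×t matrix Sᵀ via S = (B | C − μI) with columns s_1,…,s_n ∈ ℝ^t. Then μI − A = Sᵀ(μI − C)⁻¹S; in particular, with ⟨x,y⟩ := xᵀ(μI−C)⁻¹y, one has ⟨s_u,s_u⟩ = μ for all u and ⟨s_u,s_v⟩ = −A_{uv} for u ≠ v. -/
open Matrix

/-- The bilinear form `⟨x, y⟩ = xᵀ (μI - C)⁻¹ y` associated with a star complement. -/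
noncomputable def starBilin {t : ℕ} (μ : ℝ) (C : Matrix (Fin t) (Fin t) ℝ) (x y : Fin t → ℝ) : ℝ :=
  x ⬝ᵥ ((μ • (1 : Matrix (Fin t) (Fin t) ℝ) - C)⁻¹).mulVec y

/-!
Writing `M = μI - C`, the matrix `S = (B | -M)` gives
`Sᵀ M⁻¹ S = [[Bᵀ M⁻¹ B, -Bᵀ], [-B, M]]` as soon as `M` is symmetric and invertible.
The reconstruction identity `μI - A_S = Bᵀ M⁻¹ B` turns the top-left block into that of
`μI - A`, so `μI - A = Sᵀ M⁻¹ S`, and the Gram entries `⟨s_u, s_v⟩` are the entries of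
`μI - A`.
-/

namespace Matrix

variable {R : Type*} [CommRing R] {m n : Type*}

lemma isUnit_det_smul_one_sub_of_not_eigenvector [Fintype n] [DecidableEq n] {K : Type*} [Field K]
    {C : Matrix n n K} {μ : K}
    (hC : ¬ ∃ w : n → K, w ≠ 0 ∧ C *ᵥ w = μ • w) :
    IsUnit (μ • (1 : Matrix n n K) - C).det := by
  refine isUnit_iff_ne_zero.mpr fun hdet => hC ?_
  obtain ⟨w, hw, hker⟩ := exists_mulVec_eq_zero_iff.mpr hdet
  rw [sub_mulVec, smul_mulVec, one_mulVec, sub_eq_zero] at hker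
  exact ⟨w, hw, hker.symm⟩

lemma smul_one_sub_fromBlocks [DecidableEq m] [DecidableEq n] (μ : R) (A : Matrix m m R)
    (B : Matrix n m R) (C : Matrix n n R) :
    μ • (1 : Matrix (m ⊕ n) (m ⊕ n) R) - fromBlocks A Bᵀ B C =
      fromBlocks (μ • 1 - A) (-Bᵀ) (-B) (μ • 1 - C) := by
  rw [← fromBlocks_one, fromBlocks_smul, sub_eq_add_neg, fromBlocks_neg, fromBlocks_add]
  simp only [smul_zero, zero_add, sub_eq_add_neg]

lemma fromCols_neg_transpose_mul_inv_mul [Fintype n] [DecidableEq n] (B : Matrix n m R)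
    {M : Matrix n n R} (hM : M.IsSymm) (hdet : IsUnit M.det) :
    (fromCols B (-M))ᵀ * M⁻¹ * fromCols B (-M) =
      fromBlocks (Bᵀ * M⁻¹ * B) (-Bᵀ) (-B) M := by
  rw [transpose_fromCols, transpose_neg, hM.eq, fromRows_mul, fromRows_mul_fromCols,
    Matrix.neg_mul, mul_nonsing_inv M hdet, Matrix.mul_neg]
  simp only [Matrix.mul_assoc, nonsing_inv_mul M hdet, Matrix.mul_one, Matrix.neg_mul,
    Matrix.one_mul, neg_neg]

lemma transpose_mul_mul_apply [Fintype n] (S : Matrix n m R) (N : Matrix n n R) (u v : m) :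
    (Sᵀ * N * S) u v = (fun i => S i u) ⬝ᵥ N *ᵥ (fun i => S i v) := by
  rw [Matrix.mul_assoc, mul_apply, dotProduct]
  rfl

end Matrix

theorem extended_reconstruction {k t : ℕ}
    (AS : Matrix (Fin k) (Fin k) ℝ) (B : Matrix (Fin t) (Fin k) ℝ)
    (C : Matrix (Fin t) (Fin t) ℝ)
    (A : Matrix (Fin k ⊕ Fin t) (Fin k ⊕ Fin t) ℝ)
    (hA : A = Matrix.fromBlocks AS Bᵀ B C)
    (hsymm : A.IsSymm)
    (hdiag : ∀ p, A p p = 0)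
    (μ : ℝ)
    (hC : ¬ ∃ w : Fin t → ℝ, w ≠ 0 ∧ C.mulVec w = μ • w)
    (hrec : μ • (1 : Matrix (Fin k) (Fin k) ℝ) - AS =
      Bᵀ * (μ • (1 : Matrix (Fin t) (Fin t) ℝ) - C)⁻¹ * B)
    (S : Matrix (Fin t) (Fin k ⊕ Fin t) ℝ)
    (hS : S = Matrix.fromCols B (C - μ • (1 : Matrix (Fin t) (Fin t) ℝ))) :
    μ • (1 : Matrix (Fin k ⊕ Fin t) (Fin k ⊕ Fin t) ℝ) - A =
        Sᵀ * (μ • (1 : Matrix (Fin t) (Fin t) ℝ) - C)⁻¹ * S ∧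
      (∀ u, starBilin μ C (fun i => S i u) (fun i => S i u) = μ) ∧
      (∀ u v, u ≠ v → starBilin μ C (fun i => S i u) (fun i => S i v) = - A u v) := by
  have hCsymm : C.IsSymm := (isSymm_fromBlocks_iff.mp (hA ▸ hsymm)).2.2.2
  have hMsymm : (μ • (1 : Matrix (Fin t) (Fin t) ℝ) - C).IsSymm :=
    (isSymm_one.smul μ).sub hCsymm
  have hS_neg : S = fromCols B (-(μ • (1 : Matrix (Fin t) (Fin t) ℝ) - C)) := by
    rw [hS, neg_sub]
  have hfactor : μ • (1 : Matrix (Fin k ⊕ Fin t) (Fin k ⊕ Fin t) ℝ) - A =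
      Sᵀ * (μ • (1 : Matrix (Fin t) (Fin t) ℝ) - C)⁻¹ * S := by
    rw [hS_neg, fromCols_neg_transpose_mul_inv_mul B hMsymm
      (isUnit_det_smul_one_sub_of_not_eigenvector hC), hA, smul_one_sub_fromBlocks, hrec]
  have gram (u v) : starBilin μ C (fun i => S i u) (fun i => S i v) =
      (μ • (1 : Matrix (Fin k ⊕ Fin t) (Fin k ⊕ Fin t) ℝ) - A) u v := by
    rw [hfactor, transpose_mul_mul_apply, starBilin]
  refine ⟨hfactor, fun u => ?_, fun u v huv => ?_⟩
  · simp [gram, hdiag]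
  · simp [gram, one_apply_ne huv]
end

section
/- With the setup of the Reconstruction Theorem, let w = (w_1,…,w_n)ᵀ be any vector orthogonal to the μ-eigenspace E(μ) of A, and let q = (w_{k+1},…,w_n)ᵀ be its restriction to the star complement coordinates. Then ⟨s_u, q⟩ = −w_u for all 1 ≤ u ≤ n, where ⟨x,y⟩ = xᵀ(μI−C)⁻¹y and s_u are the columns of S = (B | C − μI). -/
open Matrix

/-
For every `p`, the vector `(p, (μI - C)⁻¹Bp)` is a `μ`-eigenvector of `A`: its lower block
equation holds by construction and its upper one is the reconstruction identity. Orthogonality of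
`w` to all these vectors gives `w_S = -Bᵀ(μI - C)⁻¹q`, which is the claim on the star set because
`μI - C` is symmetric; on the star complement, `(C - μI)(μI - C)⁻¹ = -I` gives the claim at once.
-/

namespace Matrix

variable {K : Type*} [Field K] {m n : Type*} [Fintype m] [Fintype n] [DecidableEq m]
  [DecidableEq n]

theorem isUnit_det_smul_one_sub {C : Matrix n n K} {μ : K}
    (hC : ¬ ∃ v : n → K, v ≠ 0 ∧ C *ᵥ v = μ • v) : IsUnit (μ • 1 - C).det := by
  rw [isUnit_iff_ne_zero, Ne, ← exists_mulVec_eq_zero_iff]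
  rintro ⟨v, hv, hMv⟩
  rw [sub_mulVec, smul_mulVec, one_mulVec, sub_eq_zero] at hMv
  exact hC ⟨v, hv, hMv.symm⟩

theorem fromBlocks_mulVec_sumElim_eq_smul {AS : Matrix m m K} {B' : Matrix m n K}
    {B : Matrix n m K} {C : Matrix n n K} {μ : K} (hdet : IsUnit (μ • 1 - C).det)
    (hrec : μ • 1 - AS = B' * (μ • 1 - C)⁻¹ * B) (p : m → K) :
    fromBlocks AS B' B C *ᵥ Sum.elim p ((μ • 1 - C)⁻¹ *ᵥ B *ᵥ p) =
      μ • Sum.elim p ((μ • 1 - C)⁻¹ *ᵥ B *ᵥ p) := by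
  have hupper : AS *ᵥ p + B' *ᵥ ((μ • 1 - C)⁻¹ *ᵥ B *ᵥ p) = μ • p := by
    rw [mulVec_mulVec, mulVec_mulVec, ← hrec, sub_mulVec, smul_mulVec, one_mulVec,
      add_sub_cancel]
  have hlower : B *ᵥ p + C *ᵥ ((μ • 1 - C)⁻¹ *ᵥ B *ᵥ p) = μ • ((μ • 1 - C)⁻¹ *ᵥ B *ᵥ p) := by
    have h : (μ • 1 - C) *ᵥ ((μ • 1 - C)⁻¹ *ᵥ B *ᵥ p) = B *ᵥ p := by
      rw [mulVec_mulVec, mul_nonsing_inv _ hdet, one_mulVec]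
    rw [sub_mulVec, smul_mulVec, one_mulVec] at h
    exact (sub_eq_iff_eq_add.mp h).symm
  rw [fromBlocks_mulVec, Sum.elim_comp_inl, Sum.elim_comp_inr, hupper, hlower]
  ext (i | i) <;> rfl

theorem comp_inl_eq_of_orthogonal_eigenvectors {AS : Matrix m m K} {B' : Matrix m n K}
    {B : Matrix n m K} {C : Matrix n n K} {μ : K} (hdet : IsUnit (μ • 1 - C).det)
    (hrec : μ • 1 - AS = B' * (μ • 1 - C)⁻¹ * B) {w : m ⊕ n → K}
    (hw : ∀ v, fromBlocks AS B' B C *ᵥ v = μ • v → w ⬝ᵥ v = 0) :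
    w ∘ Sum.inl = -((w ∘ Sum.inr) ᵥ* ((μ • 1 - C)⁻¹ * B)) := by
  refine eq_neg_of_add_eq_zero_left (dotProduct_eq _ 0 fun p => ?_)
  rw [zero_dotProduct]
  have := hw _ (fromBlocks_mulVec_sumElim_eq_smul hdet hrec p)
  rwa [← Sum.elim_comp_inl_inr w, sumElim_dotProduct_sumElim, dotProduct_mulVec,
    dotProduct_mulVec, vecMul_vecMul, ← add_dotProduct] at this

end Matrix

theorem orthogonal_vector_lemma {k t : ℕ}
    (AS : Matrix (Fin k) (Fin k) ℝ) (B : Matrix (Fin t) (Fin k) ℝ)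
    (C : Matrix (Fin t) (Fin t) ℝ)
    (A : Matrix (Fin k ⊕ Fin t) (Fin k ⊕ Fin t) ℝ)
    (hA : A = Matrix.fromBlocks AS Bᵀ B C)
    (hsymm : A.IsSymm)
    (μ : ℝ)
    (hC : ¬ ∃ v : Fin t → ℝ, v ≠ 0 ∧ C.mulVec v = μ • v)
    (hrec : μ • (1 : Matrix (Fin k) (Fin k) ℝ) - AS =
      Bᵀ * (μ • (1 : Matrix (Fin t) (Fin t) ℝ) - C)⁻¹ * B)
    (S : Matrix (Fin t) (Fin k ⊕ Fin t) ℝ)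
    (hS : S = Matrix.fromCols B (C - μ • (1 : Matrix (Fin t) (Fin t) ℝ)))
    (w : (Fin k ⊕ Fin t) → ℝ)
    (hw : ∀ v : (Fin k ⊕ Fin t) → ℝ, A.mulVec v = μ • v → w ⬝ᵥ v = 0)
    (q : Fin t → ℝ) (hq : q = fun i => w (Sum.inr i)) :
    ∀ u : Fin k ⊕ Fin t, starBilin μ C (fun i => S i u) q = - w u := by
  subst hA hS hq
  have hdet := isUnit_det_smul_one_sub hC
  have hMsymm : (μ • 1 - C).IsSymm :=
    (isSymm_one.smul μ).sub (isSymm_fromBlocks_iff.mp hsymm).2.2.2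
  have hinl : w ∘ Sum.inl = -(Bᵀ *ᵥ (μ • 1 - C)⁻¹ *ᵥ (w ∘ Sum.inr)) := by
    rw [comp_inl_eq_of_orthogonal_eigenvectors hdet hrec hw, ← mulVec_transpose, transpose_mul,
      hMsymm.inv.eq, mulVec_mulVec]
  have hinr : (C - μ • 1)ᵀ *ᵥ (μ • 1 - C)⁻¹ *ᵥ (w ∘ Sum.inr) = -(w ∘ Sum.inr) := by
    rw [← neg_sub, transpose_neg, hMsymm.eq, neg_mulVec, mulVec_mulVec, mul_nonsing_inv _ hdet,
      one_mulVec]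
  suffices h : (fromCols B (C - μ • 1))ᵀ *ᵥ ((μ • 1 - C)⁻¹ *ᵥ (w ∘ Sum.inr)) = -w from
    fun u => congrFun h u
  rw [transpose_fromCols, fromRows_mulVec]
  ext (j | i)
  · simpa [neg_eq_iff_eq_neg] using (congrFun hinl j).symm
  · simpa using congrFun hinr i
end

section
/- Let Σ be a signed graph with n vertices and let μ ∉ {0,1,−1} be an eigenvalue of Σ with multiplicity k. Then n ≤ C(t+2, 3) where t = n − k. -/
/-!
Put `M = A - μ • 1`, of rank `t = n - k`, and factor `M = B * D` with `B` of width `t`.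
The cubes `c ⊗ c ⊗ c` of the columns `c` of `M` are linearly independent: on the diagonal,
a relation `∑ p, g p • c_p ⊗ c_p ⊗ c_p = 0` says, as `x ^ 3 = x` for `x ∈ {0, 1, -1}`, that
`g` is an eigenvector of `M` for `μ ^ 3 - μ`; pairing it with the slices `q, q, ·` of the
relation gives `(μ ^ 3 - μ) * ∑ p, (g p * M q p) ^ 2 = 0`, so `g q * μ = 0`.
On the other hand the cubes are images under `B ⊗ B ⊗ B` of symmetric 3-tensors on a
`t`-dimensional space, which form a space of dimension `(t + 2).choose 3`.
-/

open Matrix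

namespace Matrix

variable {ι κ τ K : Type*}

theorem exists_eq_mul_of_rank [Field K] [Fintype κ] (M : Matrix ι κ K) :
    ∃ (B : Matrix ι (Fin M.rank) K) (D : Matrix (Fin M.rank) κ K), M = B * D := by
  set V := Submodule.span K (Set.range M.col)
  have : Module.Finite K V := FiniteDimensional.span_of_finite K (Set.finite_range _)
  let b : Module.Basis (Fin M.rank) K V :=
    Module.finBasisOfFinrankEq K V M.rank_eq_finrank_span_cols.symm
  have hcol : ∀ p, M.col p ∈ V := fun p => Submodule.subset_span ⟨p, rfl⟩
  refine ⟨of fun q i => (b i : ι → K) q, of fun i p => b.repr ⟨M.col p, hcol p⟩ i, ?_⟩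
  ext q p
  have h := congrArg (fun v : V => (v : ι → K) q) (b.sum_repr ⟨M.col p, hcol p⟩)
  simp only [Submodule.coe_sum, Submodule.coe_smul, Finset.sum_apply, Pi.smul_apply,
    smul_eq_mul] at h
  rw [mul_apply, ← col_apply M p q, ← h]
  exact Finset.sum_congr rfl fun i _ => mul_comm _ _

def colCube [Mul K] (M : Matrix ι κ K) (p : κ) : ι → ι → ι → K :=
  fun q r s => M q p * M r p * M s p

/-- `B ⊗ B ⊗ B` on symmetric tensors, a symmetric tensor on `τ` being given by its values on
multisets of size 3. -/
def symCubeLin [CommSemiring K] [Fintype τ] (B : Matrix ι τ K) :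
    (Sym τ 3 → K) →ₗ[K] (ι → ι → ι → K) where
  toFun F q r s := ∑ i, ∑ j, ∑ l, F (i ::ₛ j ::ₛ l ::ₛ .nil) * (B q i * B r j * B s l)
  map_add' F G := by
    ext q r s
    simp only [Pi.add_apply, add_mul, Finset.sum_add_distrib]
  map_smul' c F := by
    ext q r s
    simp only [Pi.smul_apply, smul_eq_mul, RingHom.id_apply, Finset.mul_sum, mul_assoc]

theorem colCube_mul_mem_range_symCubeLin [CommSemiring K] [Fintype τ] (B : Matrix ι τ K)
    (D : Matrix τ κ K) (p : κ) :
    (B * D).colCube p ∈ LinearMap.range B.symCubeLin := by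
  refine ⟨fun m => (m.1.map (D · p)).prod, ?_⟩
  ext q r s
  simp only [symCubeLin, LinearMap.coe_mk, AddHom.coe_mk, colCube, mul_apply]
  rw [Finset.sum_mul_sum, Finset.sum_mul]
  simp_rw [Finset.sum_mul_sum]
  refine Finset.sum_congr rfl fun i _ => Finset.sum_congr rfl fun j _ =>
    Finset.sum_congr rfl fun l _ => ?_
  simp only [Sym.val_eq_coe, Sym.coe_cons, Sym.coe_nil, Multiset.map_cons, Multiset.map_zero,
    Multiset.prod_cons, Multiset.prod_zero]
  ring

theorem card_le_choose_of_linearIndependent_colCube [Field K] [Fintype κ] [Fintype τ]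
    (B : Matrix ι τ K) (D : Matrix τ κ K) (h : LinearIndependent K (B * D).colCube) :
    Fintype.card κ ≤ (Fintype.card τ + 2).choose 3 := by
  classical
  calc Fintype.card κ = Module.finrank K (Submodule.span K (Set.range (B * D).colCube)) :=
        (finrank_span_eq_card h).symm
    _ ≤ Module.finrank K (LinearMap.range B.symCubeLin) :=
        Submodule.finrank_mono (Submodule.span_le.mpr <| Set.range_subset_iff.mpr
          (colCube_mul_mem_range_symCubeLin B D))
    _ ≤ Module.finrank K (Sym τ 3 → K) := LinearMap.finrank_range_le _
    _ = (Fintype.card τ + 2).choose 3 := by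
        rw [Module.finrank_fintype_fun_eq_card, Sym.card_sym_eq_choose]; rfl

theorem mulVec_eq_smul_of_sum_smul_colCube_eq_zero [CommRing K] [Fintype ι]
    {M : Matrix ι ι K} {c : K} (hdiag : ∀ p, M p p = c)
    (hoff : ∀ p q, p ≠ q → M p q ^ 3 = M p q) {g : ι → K}
    (hg : ∑ p, g p • M.colCube p = 0) :
    M *ᵥ g = (c - c ^ 3) • g := by
  classical
  ext q
  have hcube : ∀ p, g p * (M q p * M q p * M q p)
      = M q p * g p + if p = q then (c ^ 3 - c) * g q else 0 := fun p => by
    by_cases h : p = q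
    · subst h; rw [hdiag, if_pos rfl]; ring
    · rw [if_neg h]; linear_combination g p * hoff q p (Ne.symm h)
  have hqqq := congrFun (congrFun (congrFun hg q) q) q
  simp only [Finset.sum_apply, Pi.smul_apply, smul_eq_mul, colCube, hcube,
    Finset.sum_add_distrib, Finset.sum_ite_eq', Finset.mem_univ, if_true] at hqqq
  simp only [mulVec, dotProduct, Pi.smul_apply, smul_eq_mul, Pi.zero_apply] at hqqq ⊢
  linear_combination hqqq

theorem linearIndependent_colCube [Field K] [LinearOrder K] [IsStrictOrderedRing K]
    [Fintype ι] {M : Matrix ι ι K} (hM : M.IsSymm) {c : K}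
    (hdiag : ∀ p, M p p = c) (hc : c ^ 3 ≠ c) (hoff : ∀ p q, p ≠ q → M p q ^ 3 = M p q) :
    LinearIndependent K M.colCube := by
  rw [Fintype.linearIndependent_iff]
  intro g hg
  have heig := mulVec_eq_smul_of_sum_smul_colCube_eq_zero hdiag hoff hg
  have hrel : ∀ q s, ∑ p, g p * (M q p * M q p * M s p) = 0 := fun q s => by
    simpa [colCube, Finset.sum_apply] using congrFun (congrFun (congrFun hg q) q) s
  have hsq : ∀ q, (c - c ^ 3) * ∑ p, (g p * M q p) ^ 2 = 0 := fun q => by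
    calc (c - c ^ 3) * ∑ p, (g p * M q p) ^ 2
        = ∑ p, (M *ᵥ g) p * (g p * M q p * M q p) := by
          rw [heig, Finset.mul_sum]
          exact Finset.sum_congr rfl fun p _ => by simp only [Pi.smul_apply, smul_eq_mul]; ring
      _ = ∑ s, g s * ∑ p, g p * (M q p * M q p * M s p) := by
          simp only [mulVec, dotProduct, Finset.sum_mul, Finset.mul_sum]
          rw [Finset.sum_comm]
          refine Finset.sum_congr rfl fun s _ => Finset.sum_congr rfl fun p _ => ?_
          rw [hM.apply s p]
          ring
      _ = 0 := Finset.sum_eq_zero fun s _ => by rw [hrel, mul_zero]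
  intro q
  have hc0 : c ≠ 0 := by rintro rfl; norm_num at hc
  have hsum := (mul_eq_zero.mp (hsq q)).resolve_left (sub_ne_zero.mpr (Ne.symm hc))
  have hq := (Finset.sum_eq_zero_iff_of_nonneg fun p _ => sq_nonneg (g p * M q p)).mp hsum q
    (Finset.mem_univ q)
  rw [hdiag] at hq
  exact (mul_eq_zero.mp (pow_eq_zero_iff two_ne_zero |>.mp hq)).resolve_right hc0

theorem rank_sub_smul_one_add_finrank_eigenspace [Field K] [Fintype ι] [DecidableEq ι]
    (A : Matrix ι ι K) (μ : K) :
    (A - μ • 1).rank + Module.finrank K (Module.End.eigenspace (toLin' A) μ)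
      = Fintype.card ι := by
  have hker : LinearMap.ker (toLin' (A - μ • 1)) = Module.End.eigenspace (toLin' A) μ := by
    rw [Module.End.eigenspace_def, map_sub, map_smul, toLin'_one]
    rfl
  rw [← hker, ← Module.finrank_fintype_fun_eq_card (R := K)]
  exact LinearMap.finrank_range_add_finrank_ker _

end Matrix

theorem cubic_bound_on_order_general {n : ℕ}
    (A : Matrix (Fin n) (Fin n) ℝ)
    (hsymm : A.IsSymm)
    (hentries : ∀ p q, A p q ∈ ({0, 1, -1} : Set ℝ))
    (hdiag : ∀ p, A p p = 0)
    (μ : ℝ) (hμ : μ ∉ ({0, 1, -1} : Set ℝ))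
    (k : ℕ) (hk : k = Module.finrank ℝ (Module.End.eigenspace (Matrix.toLin' A) μ))
    (t : ℕ) (ht : t = n - k) :
    n ≤ (t + 2).choose 3 := by
  set M := A - μ • 1
  have hμ3 : (-μ) ^ 3 ≠ -μ := by
    simp only [Set.mem_insert_iff, Set.mem_singleton_iff, not_or] at hμ
    intro h
    have : μ * (μ - 1) * (μ + 1) = 0 := by linear_combination -h
    simp only [mul_eq_zero, sub_eq_zero, add_eq_zero_iff_eq_neg] at this
    tauto
  have hcube : ∀ p q, p ≠ q → M p q ^ 3 = M p q := fun p q hpq => by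
    simp only [M, Matrix.sub_apply, Matrix.smul_apply, one_apply_ne hpq, smul_zero, sub_zero]
    rcases hentries p q with h | h | (h : A p q = -1) <;> rw [h] <;> norm_num
  have hind : LinearIndependent ℝ M.colCube :=
    linearIndependent_colCube (hsymm.sub (isSymm_one.smul μ))
      (fun p => by simp [M, hdiag]) hμ3 hcube
  obtain ⟨B, D, hBD⟩ := M.exists_eq_mul_of_rank
  have hcard := card_le_choose_of_linearIndependent_colCube B D (hBD ▸ hind)
  have hrank : M.rank + k = n := by
    simpa [hk] using rank_sub_smul_one_add_finrank_eigenspace A μ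
  rw [Fintype.card_fin, Fintype.card_fin] at hcard
  rwa [ht, show n - k = M.rank by omega]

theorem cubic_bound_on_order {n : ℕ}
    (A : Matrix (Fin n) (Fin n) ℝ)
    (hsymm : A.IsSymm)
    (hentries : ∀ p q, A p q ∈ ({0, 1, -1} : Set ℝ))
    (hdiag : ∀ p, A p p = 0)
    (μ : ℝ) (hμ : μ ∉ ({0, 1, -1} : Set ℝ))
    (heig : Module.End.HasEigenvalue (Matrix.toLin' A) μ)
    (k : ℕ) (hk : k = Module.finrank ℝ (Module.End.eigenspace (Matrix.toLin' A) μ))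
    (t : ℕ) (ht : t = n - k) :
    n ≤ (t + 2).choose 3 :=
  cubic_bound_on_order_general A hsymm hentries hdiag μ hμ k hk t ht
end

section
/- The 4-cycle signed graph with exactly one negative edge (adjacency matrix A with A_{12}=A_{23}=A_{34}=1, A_{14}=−1, symmetric, other entries 0) has eigenvalues √2 and −√2, each with multiplicity 2. Consequently, for each of these eigenvalues, n = 4 equals C(t+2,3) with t = 2, so the bound n ≤ C(t+2,3) is attained. -/
open Matrix

lemma aux_finrank_ge (E : Submodule ℝ (Fin 4 → ℝ)) (v w : Fin 4 → ℝ)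
    (hv : v ∈ E) (hw : w ∈ E) (hli : LinearIndependent ℝ ![v, w]) :
    2 ≤ Module.finrank ℝ E := by
  have hspan : Submodule.span ℝ (Set.range ![v, w]) ≤ E := by
    rw [Submodule.span_le]
    rintro x ⟨i, rfl⟩
    fin_cases i <;> simpa
  have := Submodule.finrank_mono hspan
  rwa [finrank_span_eq_card hli, Fintype.card_fin] at this

theorem signed_quadrangle_attains_bound
    (A : Matrix (Fin 4) (Fin 4) ℝ)
    (hA : A = !![0, 1, 0, -1; 1, 0, 1, 0; 0, 1, 0, 1; -1, 0, 1, 0]) :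
    Module.finrank ℝ (Module.End.eigenspace (Matrix.toLin' A) (Real.sqrt 2)) = 2 ∧
    Module.finrank ℝ (Module.End.eigenspace (Matrix.toLin' A) (-Real.sqrt 2)) = 2 ∧
    (4 : ℕ) = (2 + 2).choose 3 := by
  have h2 : Real.sqrt 2 * Real.sqrt 2 = 2 := Real.mul_self_sqrt (by norm_num)
  have hs : Real.sqrt 2 ≠ 0 := by positivity
  set s := Real.sqrt 2 with hsdef
  set Ep := Module.End.eigenspace (Matrix.toLin' A) s with hEp
  set Em := Module.End.eigenspace (Matrix.toLin' A) (-s) with hEm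
  have hv1 : (![s, 1, 0, -1] : Fin 4 → ℝ) ∈ Ep := by
    rw [hEp, Module.End.mem_eigenspace_iff]
    funext i
    simp only [Matrix.toLin'_apply, hA, Pi.smul_apply, smul_eq_mul]
    fin_cases i <;>
      simp [Matrix.mulVec, dotProduct, Fin.sum_univ_four] <;> nlinarith [h2]
  have hv2 : (![0, 1, s, 1] : Fin 4 → ℝ) ∈ Ep := by
    rw [hEp, Module.End.mem_eigenspace_iff]
    funext i
    simp only [Matrix.toLin'_apply, hA, Pi.smul_apply, smul_eq_mul]
    fin_cases i <;>
      simp [Matrix.mulVec, dotProduct, Fin.sum_univ_four] <;> nlinarith [h2]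
  have hw1 : (![s, -1, 0, 1] : Fin 4 → ℝ) ∈ Em := by
    rw [hEm, Module.End.mem_eigenspace_iff]
    funext i
    simp only [Matrix.toLin'_apply, hA, Pi.smul_apply, smul_eq_mul]
    fin_cases i <;>
      simp [Matrix.mulVec, dotProduct, Fin.sum_univ_four] <;> nlinarith [h2]
  have hw2 : (![0, 1, -s, 1] : Fin 4 → ℝ) ∈ Em := by
    rw [hEm, Module.End.mem_eigenspace_iff]
    funext i
    simp only [Matrix.toLin'_apply, hA, Pi.smul_apply, smul_eq_mul]
    fin_cases i <;>
      simp [Matrix.mulVec, dotProduct, Fin.sum_univ_four] <;> nlinarith [h2]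
  have hli1 : LinearIndependent ℝ ![(![s, 1, 0, -1] : Fin 4 → ℝ), ![0, 1, s, 1]] := by
    rw [LinearIndependent.pair_iff]
    intro a b hab
    have h0 := congrFun hab 0
    have h1 := congrFun hab 2
    simp at h0 h1
    exact ⟨h0.resolve_right hs, h1.resolve_right hs⟩
  have hli2 : LinearIndependent ℝ ![(![s, -1, 0, 1] : Fin 4 → ℝ), ![0, 1, -s, 1]] := by
    rw [LinearIndependent.pair_iff]
    intro a b hab
    have h0 := congrFun hab 0
    have h1 := congrFun hab 2
    simp at h0 h1
    exact ⟨h0.resolve_right hs, h1.resolve_right hs⟩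
  have hgep : 2 ≤ Module.finrank ℝ Ep := aux_finrank_ge _ _ _ hv1 hv2 hli1
  have hgem : 2 ≤ Module.finrank ℝ Em := aux_finrank_ge _ _ _ hw1 hw2 hli2
  have hdisj : Ep ⊓ Em = ⊥ := by
    have hne : s ≠ -s := by
      intro h; apply hs; linarith [h2, congrArg id h]
    have := Module.End.disjoint_genEigenspace (Matrix.toLin' A) hne 1 1
    simpa [Module.End.eigenspace, disjoint_iff, hEp, hEm] using this
  have hsum : Module.finrank ℝ Ep + Module.finrank ℝ Em ≤ 4 := by
    have h := Submodule.finrank_sup_add_finrank_inf_eq Ep Em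
    rw [hdisj] at h
    simp at h
    rw [← h]
    have := Submodule.finrank_le (Ep ⊔ Em)
    simpa using this
  refine ⟨by omega, by omega, by norm_num⟩
end

section
/- Let N be the 8×120 matrix whose columns are the positive roots of the root system E₈ (each root has squared norm 2). Then A = NᵀN − 2I is a symmetric 120×120 matrix with zero diagonal and entries in {0,1,−1}, and its eigenvalues are 28 with multiplicity 8 and −2 with multiplicity 112. -/
/-!
Summing `v vᵀ` over all `240` roots gives a multiple of the identity, because the root system is
invariant under permutations of the coordinates (equalising the diagonal) and under sign changes
of two coordinates (killing the off-diagonal entries). Since the roots are the positive roots and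
their negatives, `N Nᵀ = 30 I`, so `(Nᵀ N)² = 30 Nᵀ N` and `Nᵀ N` has rank `8`: its eigenvalues are
`30` on its range and `0` on its kernel. The entries of `Nᵀ N` off the diagonal are inner products
of distinct, non-opposite roots; these are integers because the roots lie in the `E₈` lattice, and
lie strictly between `-2` and `2` by Cauchy–Schwarz.
-/

open Matrix

/-- Membership in the root system `E₈`: the `112` roots `±eᵢ ± eⱼ` (`i < j`), which are exactly
the vectors with entries in `{0, 1, -1}` of squared norm `2`, together with the `128` roots
`½ Σ ± eᵢ` with an even number of positive summands, i.e. the vectors with all entries `±½`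
whose coordinate sum is an even integer. -/
def IsE8Root (v : Fin 8 → ℝ) : Prop :=
  ((∀ i, v i ∈ ({0, 1, -1} : Set ℝ)) ∧ v ⬝ᵥ v = 2) ∨
  ((∀ i, v i ∈ ({1 / 2, -1 / 2} : Set ℝ)) ∧ ∃ m : ℤ, (∑ i, v i) = 2 * m)

open Module Finset
open scoped Pointwise

theorem Finset.sum_comp_of_involutive {α β : Type*} [AddCommMonoid β] {s : Finset α}
    {σ : α → α} (hσ : Function.Involutive σ) (hs : ∀ x ∈ s, σ x ∈ s) (f : α → β) :
    ∑ x ∈ s, f (σ x) = ∑ x ∈ s, f x :=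
  sum_nbij' σ σ hs hs (fun x _ => hσ x) (fun x _ => hσ x) fun _ _ => rfl

theorem Finset.sum_union_neg_of_even {α β : Type*} [AddGroup α] [DecidableEq α]
    [AddCommMonoid β] {s : Finset α} (hs : Disjoint s (-s)) {f : α → β}
    (hf : ∀ x, f (-x) = f x) : ∑ x ∈ s ∪ -s, f x = 2 • ∑ x ∈ s, f x := by
  rw [sum_union hs, two_nsmul, ← image_neg_eq_neg,
    sum_image fun x _ y _ h => neg_injective h]
  simp only [hf]

theorem Function.involutive_piecewise_neg {ι G : Type*} [DecidableEq ι] [InvolutiveNeg G]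
    (s : Finset ι) : Function.Involutive fun v : ι → G => s.piecewise (-v) v := fun v => by
  ext l
  by_cases hl : l ∈ s <;> simp [hl]

section Isotropy

variable {n : ℕ} {R : Finset (Fin n → ℝ)}

theorem sum_mul_apply_eq_zero_of_piecewise_neg_mem (hn : 2 < n)
    (hR : ∀ v ∈ R, ∀ i k : Fin n, i ≠ k → ({i, k} : Finset (Fin n)).piecewise (-v) v ∈ R)
    {i j : Fin n} (hij : i ≠ j) : ∑ v ∈ R, v i * v j = 0 := by
  obtain ⟨k, hki, hkj⟩ := Fin.exists_ne_and_ne_of_two_lt i j hn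
  have hflip := sum_comp_of_involutive (Function.involutive_piecewise_neg {i, k})
    (fun v hv => hR v hv i k hki.symm) fun v => v i * v j
  have hj : j ∉ ({i, k} : Finset (Fin n)) := by simp [hij.symm, hkj.symm]
  simp only [piecewise_eq_of_mem _ _ _ (mem_insert_self i {k}), piecewise_eq_of_notMem _ _ _ hj,
    Pi.neg_apply, neg_mul, sum_neg_distrib] at hflip
  linarith

theorem sum_mul_self_apply_eq_of_comp_swap_mem
    (hR : ∀ v ∈ R, ∀ i j : Fin n, v ∘ Equiv.swap i j ∈ R) (i j : Fin n) :
    ∑ v ∈ R, v i * v i = ∑ v ∈ R, v j * v j := by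
  have hswap := sum_comp_of_involutive (σ := fun v => v ∘ Equiv.swap i j) (fun v => by ext; simp)
    (fun v hv => hR v hv i j) fun v => v i * v i
  simpa using hswap.symm

theorem sum_mul_apply_eq_of_swap_piecewise_neg_mem (hn : 2 < n)
    (hswap : ∀ v ∈ R, ∀ i j : Fin n, v ∘ Equiv.swap i j ∈ R)
    (hneg : ∀ v ∈ R, ∀ i k : Fin n, i ≠ k → ({i, k} : Finset (Fin n)).piecewise (-v) v ∈ R)
    (i j : Fin n) :
    ∑ v ∈ R, v i * v j = if i = j then (∑ v ∈ R, v ⬝ᵥ v) / n else 0 := by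
  split_ifs with hij
  · subst hij
    have htrace : ∑ v ∈ R, v ⬝ᵥ v = n * ∑ v ∈ R, v i * v i := by
      simp only [dotProduct]
      rw [sum_comm, sum_congr rfl fun l _ => sum_mul_self_apply_eq_of_comp_swap_mem hswap l i]
      simp
    rw [htrace]
    field_simp
  · exact sum_mul_apply_eq_zero_of_piecewise_neg_mem hn hneg hij

end Isotropy

namespace Matrix

section MulTransposeEqSmulOne

variable {m n : Type*} [Fintype m] [Fintype n] [DecidableEq m] {N : Matrix m n ℝ} {c : ℝ}

theorem transpose_mul_self_mul_self (hN : N * Nᵀ = c • 1) :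
    (Nᵀ * N) * (Nᵀ * N) = c • (Nᵀ * N) := by
  rw [Matrix.mul_assoc, ← Matrix.mul_assoc N, hN, Matrix.smul_mul, Matrix.one_mul,
    Matrix.mul_smul]

theorem rank_transpose_mul_self_of_mul_transpose_eq (hc : c ≠ 0) (hN : N * Nᵀ = c • 1) :
    (Nᵀ * N).rank = Fintype.card m := by
  rw [rank_transpose_mul_self, ← rank_self_mul_transpose, hN]
  exact rank_of_isUnit _ (isUnit_one.smul (IsUnit.mk0 c hc).unit)

end MulTransposeEqSmulOne

theorem transpose_mul_self_sub_smul_one_apply {R m n : Type*} [CommRing R] [Fintype m]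
    [DecidableEq n] (N : Matrix m n R) (a : R) (u w : n) :
    (Nᵀ * N - a • (1 : Matrix n n R)) u w = Nᵀ u ⬝ᵥ Nᵀ w - if u = w then a else 0 := by
  rw [sub_apply, smul_apply, one_apply, smul_ite, smul_eq_mul, mul_one, smul_zero]
  rfl

variable {K : Type*} [Field K] {n : Type*} [Fintype n] [DecidableEq n]

theorem eigenspace_toLin'_sub_smul_one (M : Matrix n n K) (a μ : K) :
    End.eigenspace (toLin' (M - a • 1)) μ = End.eigenspace (toLin' M) (μ + a) := by
  ext x
  simp only [End.mem_eigenspace_iff, toLin'_apply, sub_mulVec, smul_mulVec, one_mulVec, add_smul]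
  exact sub_eq_iff_eq_add

theorem eigenspace_toLin'_eq_range {M : Matrix n n K} {c : K} (hc : c ≠ 0)
    (hM : M * M = c • M) : End.eigenspace (toLin' M) c = LinearMap.range (toLin' M) := by
  ext x
  rw [End.mem_eigenspace_iff, LinearMap.mem_range, toLin'_apply]
  constructor
  · intro hx
    exact ⟨c⁻¹ • x, by rw [toLin'_apply, mulVec_smul, hx, inv_smul_smul₀ hc]⟩
  · rintro ⟨y, rfl⟩
    rw [toLin'_apply, mulVec_mulVec, hM, smul_mulVec]

variable {m : Type*} [Fintype m] [DecidableEq m] {N : Matrix m n ℝ} {c : ℝ}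

theorem finrank_eigenspace_transpose_mul_self (hc : c ≠ 0) (hN : N * Nᵀ = c • 1) :
    finrank ℝ (End.eigenspace (toLin' (Nᵀ * N)) c) = Fintype.card m := by
  rw [eigenspace_toLin'_eq_range hc (transpose_mul_self_mul_self hN), toLin'_apply']
  exact rank_transpose_mul_self_of_mul_transpose_eq hc hN

theorem finrank_eigenspace_zero_transpose_mul_self (hc : c ≠ 0) (hN : N * Nᵀ = c • 1) :
    finrank ℝ (End.eigenspace (toLin' (Nᵀ * N)) 0) = Fintype.card n - Fintype.card m := by
  have hsum := LinearMap.finrank_range_add_finrank_ker (toLin' (Nᵀ * N))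
  rw [finrank_fintype_fun_eq_card, toLin'_apply'] at hsum
  change (Nᵀ * N).rank + _ = _ at hsum
  rw [End.eigenspace_zero, toLin'_apply', ← hsum, rank_transpose_mul_self_of_mul_transpose_eq hc hN]
  omega

end Matrix

theorem dotProduct_mem_zero_one_neg_one {ι : Type*} [Fintype ι] {x y : ι → ℝ}
    (hx : x ⬝ᵥ x = 2) (hy : y ⬝ᵥ y = 2) {k : ℤ} (hk : x ⬝ᵥ y = k) (hne : x ≠ y)
    (hne' : x ≠ -y) : x ⬝ᵥ y ∈ ({0, 1, -1} : Set ℝ) := by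
  have hpos : ∀ w : ι → ℝ, w ≠ 0 → 0 < w ⬝ᵥ w := fun w hw => by
    simpa [star_trivial] using dotProduct_self_star_pos_iff.mpr hw
  have hsub := hpos (x - y) (sub_ne_zero.mpr hne)
  have hadd := hpos (x + y) fun h => hne' (eq_neg_of_add_eq_zero_left h)
  simp only [sub_dotProduct, dotProduct_sub, add_dotProduct, dotProduct_add, dotProduct_comm y x,
    hx, hy, hk] at hsub hadd
  have hk_lt : k < 2 := by exact_mod_cast (by linarith : (k : ℝ) < 2)
  have hk_gt : -2 < k := by exact_mod_cast (by linarith : (-2 : ℝ) < k)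
  rw [hk]
  interval_cases k <;> simp

theorem neg_mem_zero_one_neg_one {x : ℝ} (hx : x ∈ ({0, 1, -1} : Set ℝ)) :
    -x ∈ ({0, 1, -1} : Set ℝ) := by
  obtain h | h | h : x = 0 ∨ x = 1 ∨ x = -1 := hx <;> simp [h]

theorem neg_mem_half_neg_half {x : ℝ} (hx : x ∈ ({1 / 2, -1 / 2} : Set ℝ)) :
    -x ∈ ({1 / 2, -1 / 2} : Set ℝ) := by
  obtain h | h : x = 1 / 2 ∨ x = -1 / 2 := hx <;> simp [h] <;> norm_num

/-- The `E₈` lattice: vectors in `ℤ⁸ ∪ (ℤ + ½)⁸` with even coordinate sum. -/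
def InE8Lattice (v : Fin 8 → ℝ) : Prop :=
  ∃ (c : ℤ) (a : Fin 8 → ℤ), (∀ i, v i = c / 2 + a i) ∧ ∃ m : ℤ, ∑ i, v i = 2 * m

theorem InE8Lattice.exists_int_dotProduct {x y : Fin 8 → ℝ} (hx : InE8Lattice x)
    (hy : InE8Lattice y) : ∃ k : ℤ, x ⬝ᵥ y = k := by
  obtain ⟨c, a, hxa, m, hm⟩ := hx
  obtain ⟨d, b, hyb, n, hn⟩ := hy
  simp only [hxa, sum_add_distrib, sum_const, card_univ, Fintype.card_fin, nsmul_eq_mul] at hm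
  simp only [hyb, sum_add_distrib, sum_const, card_univ, Fintype.card_fin, nsmul_eq_mul] at hn
  refine ⟨2 * c * d + c * (n - 2 * d) + d * (m - 2 * c) + ∑ i, a i * b i, ?_⟩
  simp only [dotProduct, hxa, hyb, add_mul, mul_add, sum_add_distrib, ← mul_sum, ← sum_mul,
    sum_const, card_univ, Fintype.card_fin, nsmul_eq_mul]
  push_cast
  linear_combination (d / 2 : ℝ) * hm + (c / 2 : ℝ) * hn

namespace IsE8Root

variable {v : Fin 8 → ℝ}

theorem dotProduct_self (hv : IsE8Root v) : v ⬝ᵥ v = 2 := by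
  rcases hv with ⟨-, h⟩ | ⟨h, -⟩
  · exact h
  · have hsq : ∀ i, v i * v i = 1 / 4 := fun i => by
      obtain h | h : v i = 1 / 2 ∨ v i = -1 / 2 := h i <;> rw [h] <;> norm_num
    simp [dotProduct, hsq]
    norm_num

theorem inE8Lattice (hv : IsE8Root v) : InE8Lattice v := by
  rcases hv with ⟨h, hn⟩ | ⟨h, hm⟩
  · have hint : ∀ i, ∃ z : ℤ, v i = z := fun i => by
      obtain h | h | h : v i = 0 ∨ v i = 1 ∨ v i = -1 := h i
      exacts [⟨0, by simp [h]⟩, ⟨1, by simp [h]⟩, ⟨-1, by simp [h]⟩]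
    choose z hz using hint
    have hsq : ∑ i, z i * z i = 2 := by
      exact_mod_cast (show ((∑ i, z i * z i : ℤ) : ℝ) = 2 by push_cast [← hz]; exact hn)
    -- `z ≡ z²` modulo `2`
    obtain ⟨m, hm⟩ : Even (∑ i, z i) := by
      have hdiff : ∑ i, z i = ∑ i, z i * z i - ∑ i, z i * (z i - 1) := by
        rw [← sum_sub_distrib]
        exact sum_congr rfl fun i _ => by ring
      rw [hdiff, hsq]
      exact even_two.sub (even_sum _ fun i _ => Int.even_mul_pred_self _)
    exact ⟨0, z, fun i => by simp [hz], m, by simp_rw [hz]; exact_mod_cast (by rw [hm]; ring)⟩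
  · have hint : ∀ i, ∃ z : ℤ, v i = 1 / 2 + z := fun i => by
      obtain h | h : v i = 1 / 2 ∨ v i = -1 / 2 := h i
      exacts [⟨0, by simp [h]⟩, ⟨-1, by rw [h]; norm_num⟩]
    choose z hz using hint
    exact ⟨1, z, fun i => by simp [hz], hm⟩

theorem dotProduct_mem {w : Fin 8 → ℝ} (hv : IsE8Root v) (hw : IsE8Root w) (hne : v ≠ w)
    (hne' : v ≠ -w) : v ⬝ᵥ w ∈ ({0, 1, -1} : Set ℝ) :=
  have ⟨_, hk⟩ := hv.inE8Lattice.exists_int_dotProduct hw.inE8Lattice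
  dotProduct_mem_zero_one_neg_one hv.dotProduct_self hw.dotProduct_self hk hne hne'

theorem neg (hv : IsE8Root v) : IsE8Root (-v) := by
  rcases hv with ⟨h, hn⟩ | ⟨h, m, hm⟩
  · exact .inl ⟨fun i => neg_mem_zero_one_neg_one (h i), by simpa using hn⟩
  · exact .inr ⟨fun i => neg_mem_half_neg_half (h i), -m, by simp [hm]⟩

theorem comp_perm (hv : IsE8Root v) (σ : Equiv.Perm (Fin 8)) : IsE8Root (v ∘ σ) := by
  rcases hv with ⟨h, hn⟩ | ⟨h, m, hm⟩
  · exact .inl ⟨fun i => h (σ i), by rw [← hn]; exact Equiv.sum_comp σ fun i => v i * v i⟩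
  · exact .inr ⟨fun i => h (σ i), m, by rw [← hm]; exact Equiv.sum_comp σ v⟩

theorem piecewise_neg_pair (hv : IsE8Root v) {i k : Fin 8} (hik : i ≠ k) :
    IsE8Root (({i, k} : Finset (Fin 8)).piecewise (-v) v) := by
  have hmem : ∀ S : Set ℝ, (∀ x ∈ S, -x ∈ S) → (∀ l, v l ∈ S) →
      ∀ l, ({i, k} : Finset (Fin 8)).piecewise (-v) v l ∈ S := fun S hS h l => by
    by_cases hl : l ∈ ({i, k} : Finset (Fin 8))
    · rw [piecewise_eq_of_mem _ _ _ hl]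
      exact hS _ (h l)
    · rw [piecewise_eq_of_notMem _ _ _ hl]
      exact h l
  rcases hv with ⟨h, hn⟩ | ⟨h, m, hm⟩
  · refine .inl ⟨hmem _ (fun _ => neg_mem_zero_one_neg_one) h, ?_⟩
    rw [← hn]
    exact sum_congr rfl fun l _ => by by_cases hl : l ∈ ({i, k} : Finset (Fin 8)) <;> simp [hl]
  · refine .inr ⟨hmem _ (fun _ => neg_mem_half_neg_half) h, ?_⟩
    have hsum : ∑ l, ({i, k} : Finset (Fin 8)).piecewise (-v) v l = 2 * m - 2 * (v i + v k) := by
      rw [sum_piecewise, ← hm, ← sum_compl_add_sum {i, k}, sum_pair hik, univ_inter,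
        sum_pair hik]
      simp [compl_eq_univ_sdiff]
      ring
    rw [hsum]
    obtain hi | hi : v i = 1 / 2 ∨ v i = -1 / 2 := h i <;>
      obtain hk | hk : v k = 1 / 2 ∨ v k = -1 / 2 := h k <;> rw [hi, hk]
    exacts [⟨m - 1, by push_cast; ring⟩, ⟨m, by ring⟩, ⟨m, by ring⟩, ⟨m + 1, by push_cast; ring⟩]

end IsE8Root

theorem mul_transpose_eq_of_columns_positive_roots {ι : Type*} [Fintype ι]
    {Pos : Set (Fin 8 → ℝ)} (hPosRoot : ∀ v ∈ Pos, IsE8Root v)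
    (hPosChoice : ∀ v, IsE8Root v → (v ∈ Pos ↔ ¬ (-v ∈ Pos)))
    {N : Matrix (Fin 8) ι ℝ} (hNinj : Function.Injective fun u => Nᵀ u)
    (hNcols : Set.range (fun u => Nᵀ u) = Pos) :
    N * Nᵀ = (Fintype.card ι / 4 : ℝ) • 1 := by
  classical
  set P : Finset (Fin 8 → ℝ) := univ.image fun u => Nᵀ u
  have hP : ∀ v, v ∈ P ↔ v ∈ Pos := fun v => by simp [P, ← hNcols]
  have hdisj : Disjoint P (-P) := disjoint_left.mpr fun v hv hv' => by
    rw [hP] at hv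
    rw [mem_neg', hP] at hv'
    exact (hPosChoice v (hPosRoot v hv)).mp hv hv'
  have hroots : ∀ v, v ∈ P ∪ -P ↔ IsE8Root v := fun v => by
    rw [mem_union, mem_neg', hP, hP]
    refine ⟨fun h => h.elim (hPosRoot v) fun h => by simpa using (hPosRoot _ h).neg, fun hv => ?_⟩
    by_cases h : v ∈ Pos
    · exact .inl h
    · exact .inr (not_not.mp (mt (hPosChoice v hv).mpr h))
  have hcol : ∀ u, IsE8Root (Nᵀ u) := fun u => hPosRoot _ (hNcols ▸ ⟨u, rfl⟩)
  have hsum : ∀ f : (Fin 8 → ℝ) → ℝ, (∀ v, f (-v) = f v) →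
      ∑ v ∈ P ∪ -P, f v = 2 * ∑ u, f (Nᵀ u) := fun f hf => by
    rw [sum_union_neg_of_even hdisj hf, sum_image fun u _ w _ h => hNinj h, nsmul_eq_mul]
    norm_num
  have hiso := sum_mul_apply_eq_of_swap_piecewise_neg_mem (R := P ∪ -P) (by norm_num)
    (fun v hv i j => (hroots _).mpr (((hroots v).mp hv).comp_perm _))
    (fun v hv i k hik => (hroots _).mpr (((hroots v).mp hv).piecewise_neg_pair hik))
  ext i j
  have hij := hiso i j
  rw [hsum _ fun v => by simp, hsum _ fun v => by simp] at hij
  simp only [(hcol _).dotProduct_self, sum_const, card_univ, nsmul_eq_mul] at hij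
  rw [mul_apply, Matrix.smul_apply, one_apply]
  split_ifs at hij ⊢ <;> simp only [transpose_apply, smul_eq_mul, mul_one, mul_zero] at hij ⊢ <;>
    linarith

theorem E8_positive_roots_signed_graph_general
    (Pos : Set (Fin 8 → ℝ))
    (hPosRoot : ∀ v ∈ Pos, IsE8Root v)
    (hPosChoice : ∀ v, IsE8Root v → (v ∈ Pos ↔ ¬ (-v ∈ Pos)))
    (N : Matrix (Fin 8) (Fin 120) ℝ)
    (hNinj : Function.Injective (fun u : Fin 120 => (fun i => N i u)))
    (hNcols : Set.range (fun u : Fin 120 => (fun i => N i u)) = Pos)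
    (A : Matrix (Fin 120) (Fin 120) ℝ)
    (hA : A = Nᵀ * N - 2 • (1 : Matrix (Fin 120) (Fin 120) ℝ)) :
    A.IsSymm ∧
    (∀ u, A u u = 0) ∧
    (∀ u v, A u v ∈ ({0, 1, -1} : Set ℝ)) ∧
    Module.finrank ℝ (Module.End.eigenspace (Matrix.toLin' A) 28) = 8 ∧
    Module.finrank ℝ (Module.End.eigenspace (Matrix.toLin' A) (-2)) = 112 := by
  have hNN : N * Nᵀ = (30 : ℝ) • 1 := by
    rw [mul_transpose_eq_of_columns_positive_roots hPosRoot hPosChoice hNinj hNcols]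
    norm_num
  have hA' : A = Nᵀ * N - (2 : ℝ) • 1 := by
    rw [hA, ← Nat.cast_smul_eq_nsmul ℝ]
    norm_num
  have hmem : ∀ u, Nᵀ u ∈ Pos := fun u => hNcols ▸ ⟨u, rfl⟩
  have hcol : ∀ u, IsE8Root (Nᵀ u) := fun u => hPosRoot _ (hmem u)
  refine ⟨?_, fun u => ?_, fun u w => ?_, ?_, ?_⟩
  · simp [hA', IsSymm, transpose_sub]
  · rw [hA', transpose_mul_self_sub_smul_one_apply, if_pos rfl, (hcol u).dotProduct_self,
      sub_self]
  · rw [hA', transpose_mul_self_sub_smul_one_apply]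
    split_ifs with huw
    · simp [huw, (hcol w).dotProduct_self]
    · rw [sub_zero]
      exact (hcol u).dotProduct_mem (hcol w) (hNinj.ne huw)
        fun h => (hPosChoice _ (hcol u)).mp (hmem u) (by rw [h, neg_neg]; exact hmem w)
  · rw [hA', eigenspace_toLin'_sub_smul_one, show (28 + 2 : ℝ) = 30 by norm_num,
      finrank_eigenspace_transpose_mul_self (by norm_num) hNN, Fintype.card_fin]
  · rw [hA', eigenspace_toLin'_sub_smul_one, neg_add_cancel,
      finrank_eigenspace_zero_transpose_mul_self (by norm_num) hNN, Fintype.card_fin,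
      Fintype.card_fin]

theorem E8_positive_roots_signed_graph
    (Pos : Set (Fin 8 → ℝ))
    (hPosRoot : ∀ v ∈ Pos, IsE8Root v)
    (hPosChoice : ∀ v, IsE8Root v → (v ∈ Pos ↔ ¬ (-v ∈ Pos)))
    (hPosClosed : ∀ x ∈ Pos, ∀ y ∈ Pos, IsE8Root (x + y) → x + y ∈ Pos)
    (N : Matrix (Fin 8) (Fin 120) ℝ)
    (hNinj : Function.Injective (fun u : Fin 120 => (fun i => N i u)))
    (hNcols : Set.range (fun u : Fin 120 => (fun i => N i u)) = Pos)
    (A : Matrix (Fin 120) (Fin 120) ℝ)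
    (hA : A = Nᵀ * N - 2 • (1 : Matrix (Fin 120) (Fin 120) ℝ)) :
    A.IsSymm ∧
    (∀ u, A u u = 0) ∧
    (∀ u v, A u v ∈ ({0, 1, -1} : Set ℝ)) ∧
    Module.finrank ℝ (Module.End.eigenspace (Matrix.toLin' A) 28) = 8 ∧
    Module.finrank ℝ (Module.End.eigenspace (Matrix.toLin' A) (-2)) = 112 :=
  E8_positive_roots_signed_graph_general Pos hPosRoot hPosChoice N hNinj hNcols A hA
end

section
/- Let Σ be a signed graph with n vertices and let μ ∉ {0,1,−1} be a non-main eigenvalue of Σ with multiplicity k < n−1. Then n ≤ C(t+2,3) − 1, where t = n − k. -/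
/-!
Let `E` be the `μ`-eigenspace and `K` a complement of it, so `dim K = t`. Project the standard
basis vectors onto `K` along `E` to get `x_u`. Since `A - μ` kills `E` and is symmetric, the form
`B(y, z) = yᵀ (A - μ) z` satisfies `B(x_u, x_v) = A_uv - μ δ_uv`, and since `E ⊥ j`, the functional
`ℓ(y) = ⟨j, y⟩` satisfies `ℓ(x_u) = 1`. On `K` consider the cubic forms
`f_u(y) = B(x_u, y)³ - B(x_u, y) ℓ(y)²` and `g(y) = ℓ(y) B(y, y) + μ ℓ(y)³`. As `a³ = a` on
`{0, 1, -1}`, `f_u(x_v) = (μ - μ³) δ_uv`; `g` vanishes at every `x_v`, but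
`g(x_a + x_b) = 4 (A_ab + μ) ≠ 0`. These `n + 1` forms are therefore linearly independent in the
space of cubic forms on `K`, whose dimension is at most `C(t + 2, 3)`.
-/

open Matrix Module Submodule

theorem linearIndependent_option_elim_of_eval {𝕜 X ι : Type*} [Field 𝕜] [Fintype ι]
    {f : ι → X → 𝕜} {g : X → 𝕜} {x : ι → X} {z : X} (hf : ∀ u v, u ≠ v → f u (x v) = 0)
    (hf_self : ∀ u, f u (x u) ≠ 0) (hg : ∀ v, g (x v) = 0) (hgz : g z ≠ 0) :
    LinearIndependent 𝕜 fun o : Option ι => o.elim g f := by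
  classical
  rw [Fintype.linearIndependent_iff]
  intro c hc
  have hsome : ∀ v, c (some v) = 0 := by
    intro v
    have hv := congrFun hc (x v)
    simp only [Fintype.sum_option, Option.elim, Finset.sum_apply, Pi.smul_apply,
      smul_eq_mul, hg, mul_zero, zero_add, Pi.zero_apply] at hv
    rw [Finset.sum_eq_single v (fun u _ huv => by rw [hf u v huv, mul_zero]) (by simp)] at hv
    exact (mul_eq_zero.1 hv).resolve_right (hf_self v)
  have hnone : c none = 0 := by
    have hz := congrFun hc z
    simp only [Fintype.sum_option, Option.elim, hsome, zero_smul, Finset.sum_const_zero,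
      add_zero, Pi.smul_apply, smul_eq_mul, Pi.zero_apply] at hz
    exact (mul_eq_zero.1 hz).resolve_right hgz
  rintro (_ | v)
  exacts [hnone, hsome v]

section HomogeneousForms

variable (𝕜 V : Type*) [Field 𝕜] [AddCommGroup V] [Module 𝕜 V]

def homogeneousForms (d : ℕ) : Submodule 𝕜 (V → 𝕜) :=
  span 𝕜 (Set.range fun ξ : Fin d → Dual 𝕜 V => ∏ i, ⇑(ξ i))

variable {𝕜 V}

theorem homogeneousForms_mul_le (d e : ℕ) :
    homogeneousForms 𝕜 V d * homogeneousForms 𝕜 V e ≤ homogeneousForms 𝕜 V (d + e) := by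
  rw [homogeneousForms, homogeneousForms, span_mul_span]
  refine span_mono ?_
  rintro _ ⟨_, ⟨ξ, rfl⟩, _, ⟨η, rfl⟩, rfl⟩
  exact ⟨Fin.append ξ η, by simp [Fin.prod_univ_add]⟩

theorem mul_mem_homogeneousForms {d e : ℕ} {f g : V → 𝕜} (hf : f ∈ homogeneousForms 𝕜 V d)
    (hg : g ∈ homogeneousForms 𝕜 V e) : f * g ∈ homogeneousForms 𝕜 V (d + e) :=
  homogeneousForms_mul_le d e (mul_mem_mul hf hg)

theorem dual_mem_homogeneousForms_one (ξ : Dual 𝕜 V) : ⇑ξ ∈ homogeneousForms 𝕜 V 1 :=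
  subset_span ⟨![ξ], by simp⟩

theorem bilinForm_diag_mem_homogeneousForms_two [FiniteDimensional 𝕜 V]
    (B : LinearMap.BilinForm 𝕜 V) : (fun y => B y y) ∈ homogeneousForms 𝕜 V 2 := by
  let b := finBasis 𝕜 V
  have hB : (fun y => B y y) = ∑ i, ⇑(b.coord i) * ⇑(B (b i)) := by
    ext y
    nth_rewrite 1 [← b.sum_repr y]
    simp only [map_sum, map_smul, LinearMap.sum_apply, LinearMap.smul_apply, smul_eq_mul,
      Finset.sum_apply, Pi.mul_apply, Basis.coord_apply]
  rw [hB]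
  exact sum_mem fun i _ => mul_mem_homogeneousForms (d := 1) (e := 1)
    (dual_mem_homogeneousForms_one _) (dual_mem_homogeneousForms_one _)

noncomputable def Module.Basis.monomial {ι : Type*} (b : Basis ι 𝕜 V) {d : ℕ} (m : Sym ι d) :
    V → 𝕜 :=
  (m.1.map fun j => ⇑(b.coord j)).prod

theorem homogeneousForms_le_span_monomial {ι : Type*} [Fintype ι] (b : Basis ι 𝕜 V) (d : ℕ) :
    homogeneousForms 𝕜 V d ≤ span 𝕜 (Set.range (b.monomial (d := d))) := by
  classical
  refine span_le.2 ?_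
  rintro _ ⟨ξ, rfl⟩
  have hξ : ∏ i, ⇑(ξ i) = ∏ i, ∑ j, ξ i (b j) • ⇑(b.coord j) :=
    Finset.prod_congr rfl fun i _ => by
      nth_rewrite 1 [← b.sum_dual_apply_smul_coord (ξ i)]
      simp only [LinearMap.coe_sum, LinearMap.coe_smul]
  change ∏ i, ⇑(ξ i) ∈ span 𝕜 _
  rw [hξ, Fintype.prod_sum]
  simp_rw [Finset.prod_smul]
  refine sum_mem fun σ _ =>
    smul_mem _ _ (subset_span ⟨Sym.mk (Finset.univ.val.map σ) (by simp), ?_⟩)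
  simp only [Basis.monomial, Multiset.map_map]
  rfl

instance [FiniteDimensional 𝕜 V] (d : ℕ) : FiniteDimensional 𝕜 (homogeneousForms 𝕜 V d) :=
  have := FiniteDimensional.span_of_finite 𝕜 (Set.finite_range ((finBasis 𝕜 V).monomial (d := d)))
  finiteDimensional_of_le (homogeneousForms_le_span_monomial (finBasis 𝕜 V) d)

theorem finrank_homogeneousForms_le [FiniteDimensional 𝕜 V] (d : ℕ) :
    finrank 𝕜 (homogeneousForms 𝕜 V d) ≤ (finrank 𝕜 V + d - 1).choose d := by
  let b := finBasis 𝕜 V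
  have := FiniteDimensional.span_of_finite 𝕜 (Set.finite_range (b.monomial (d := d)))
  calc finrank 𝕜 (homogeneousForms 𝕜 V d)
      ≤ finrank 𝕜 (span 𝕜 (Set.range (b.monomial (d := d)))) :=
        finrank_mono (homogeneousForms_le_span_monomial b d)
    _ ≤ Fintype.card (Sym (Fin (finrank 𝕜 V)) d) := finrank_range_le_card _
    _ = (finrank 𝕜 V + d - 1).choose d := by simp [Sym.card_sym_eq_choose]

end HomogeneousForms

theorem mul_self_mul_eq_self_iff {a : ℝ} : a * a * a = a ↔ a ∈ ({0, 1, -1} : Set ℝ) := by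
  have : a * a * a - a = a * (a - 1) * (a + 1) := by ring
  simp only [Set.mem_insert_iff, Set.mem_singleton_iff, ← sub_eq_zero (a := a * a * a), this,
    mul_eq_zero, sub_eq_zero, add_eq_zero_iff_eq_neg]
  tauto

theorem add_one_le_choose_finrank_of_gram {V : Type*} [AddCommGroup V] [Module ℝ V]
    [FiniteDimensional ℝ V] {n : ℕ} (hn : 1 < n) {A : Matrix (Fin n) (Fin n) ℝ} (hsymm : A.IsSymm)
    (hentries : ∀ p q, A p q ∈ ({0, 1, -1} : Set ℝ)) (hdiag : ∀ p, A p p = 0) {μ : ℝ}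
    (hμ : μ ∉ ({0, 1, -1} : Set ℝ)) (B : LinearMap.BilinForm ℝ V) (ℓ : Dual ℝ V) (x : Fin n → V)
    (hB : ∀ u v, B (x u) (x v) = A u v - if u = v then μ else 0) (hℓ : ∀ u, ℓ (x u) = 1) :
    n + 1 ≤ (finrank ℝ V + 2).choose 3 := by
  let f (u : Fin n) : V → ℝ := ⇑(B (x u)) * ⇑(B (x u)) * ⇑(B (x u)) - ⇑(B (x u)) * ⇑ℓ * ⇑ℓ
  let g : V → ℝ := ⇑ℓ * (fun y => B y y) + μ • (⇑ℓ * ⇑ℓ * ⇑ℓ)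
  have hmem : ∀ o : Option (Fin n), o.elim g f ∈ homogeneousForms ℝ V 3 := by
    have hξ := dual_mem_homogeneousForms_one (𝕜 := ℝ) (V := V)
    have hcube : ∀ ξ η ζ : Dual ℝ V, ⇑ξ * ⇑η * ⇑ζ ∈ homogeneousForms ℝ V 3 := fun ξ η ζ =>
      mul_mem_homogeneousForms (d := 1 + 1) (e := 1) (mul_mem_homogeneousForms (hξ ξ) (hξ η)) (hξ ζ)
    rintro (_ | u)
    · exact add_mem (mul_mem_homogeneousForms (d := 1) (e := 2) (hξ ℓ)
        (bilinForm_diag_mem_homogeneousForms_two B)) (smul_mem _ μ (hcube ℓ ℓ ℓ))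
    · exact sub_mem (hcube _ _ _) (hcube _ _ _)
  obtain ⟨a, b, hab⟩ := Fintype.exists_pair_of_one_lt_card (α := Fin n) (by simpa using hn)
  have hli : LinearIndependent ℝ fun o : Option (Fin n) => o.elim g f := by
    refine linearIndependent_option_elim_of_eval (x := x) (z := x a + x b) ?_ ?_ ?_ ?_
    · intro u v huv
      simp [f, hB, hℓ, huv, mul_self_mul_eq_self_iff.2 (hentries u v)]
    · intro u
      have hμ3 : μ * μ * μ ≠ μ := mt mul_self_mul_eq_self_iff.1 hμ
      simp only [f, Pi.sub_apply, Pi.mul_apply, hB, hℓ, hdiag, if_true]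
      exact fun h => hμ3 (by linear_combination -h)
    · intro v
      simp [g, hB, hℓ, hdiag]
    · have hsum : A a b + μ ≠ 0 := fun h => hμ (by
        rw [eq_neg_of_add_eq_zero_right h]
        obtain h' | h' | h' : A a b = 0 ∨ A a b = 1 ∨ A a b = -1 := hentries a b <;> simp [h'])
      simp only [g, Pi.add_apply, Pi.mul_apply, Pi.smul_apply, map_add, LinearMap.add_apply, hℓ,
        hB, hdiag, hab, hab.symm, hsymm.apply a b, ↓reduceIte, zero_sub, sub_zero, smul_eq_mul]
      exact fun h => hsum (by linear_combination h / 4)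
  calc n + 1 = Fintype.card (Option (Fin n)) := by simp
    _ = finrank ℝ (span ℝ (Set.range fun o : Option (Fin n) => o.elim g f)) :=
        (finrank_span_eq_card hli).symm
    _ ≤ finrank ℝ (homogeneousForms ℝ V 3) := finrank_mono (span_le.2 (Set.range_subset_iff.2 hmem))
    _ ≤ (finrank ℝ V + 2).choose 3 := finrank_homogeneousForms_le 3

theorem Submodule.apply_projectionOnto_of_le_ker {R W M : Type*} [Ring R] [AddCommGroup W]
    [Module R W] [AddCommGroup M] [Module R M] {K E : Submodule R W} (h : IsCompl K E)
    {f : W →ₗ[R] M} (hf : E ≤ LinearMap.ker f) (x : W) : f (K.projectionOnto E h x) = f x := by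
  have := hf (K.sub_projection_mem h x)
  rwa [LinearMap.mem_ker, map_sub, sub_eq_zero, ← coe_projectionOnto_apply, eq_comm] at this

theorem LinearMap.BilinForm.apply_projectionOnto_projectionOnto {R W : Type*} [CommRing R]
    [AddCommGroup W] [Module R W] {K E : Submodule R W} (h : IsCompl K E)
    {B : LinearMap.BilinForm R W} (hl : E ≤ LinearMap.ker B) (hr : E ≤ LinearMap.ker B.flip)
    (x y : W) : B (K.projectionOnto E h x) (K.projectionOnto E h y) = B x y := by
  rw [K.apply_projectionOnto_of_le_ker h (f := B (K.projectionOnto E h x))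
    fun e he => LinearMap.congr_fun (hr he) _]
  exact (K.apply_projectionOnto_of_le_ker h (f := B.flip y)
    fun e he => LinearMap.congr_fun (hl he) y) x

theorem Matrix.ker_toLin'_le_ker_toBilin'_flip {R ι : Type*} [CommRing R] [Fintype ι]
    [DecidableEq ι] (M : Matrix ι ι R) :
    LinearMap.ker (toLin' M) ≤ LinearMap.ker (toBilin' M).flip := by
  intro e he
  have hMe : M *ᵥ e = 0 := by simpa using LinearMap.mem_ker.1 he
  exact LinearMap.ext fun z => by simp [toBilin'_apply', hMe]

theorem Matrix.IsSymm.ker_toLin'_le_ker_toBilin' {R ι : Type*} [CommRing R] [Fintype ι]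
    [DecidableEq ι] {M : Matrix ι ι R} (hM : M.IsSymm) :
    LinearMap.ker (toLin' M) ≤ LinearMap.ker (toBilin' M) := by
  intro e he
  have hMe : M *ᵥ e = 0 := by simpa using LinearMap.mem_ker.1 he
  refine LinearMap.ext fun z => ?_
  rw [LinearMap.zero_apply, toBilin'_apply', dotProduct_mulVec,
    ← mulVec_transpose, hM.eq, hMe, zero_dotProduct]

theorem Matrix.IsSymm.toBilin'_projectionOnto_single {R ι : Type*} [CommRing R] [Fintype ι]
    [DecidableEq ι] {M : Matrix ι ι R} (hM : M.IsSymm) {K E : Submodule R (ι → R)}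
    (h : IsCompl K E) (hE : E ≤ LinearMap.ker (toLin' M)) (u v : ι) :
    toBilin' M (K.projectionOnto E h (Pi.single u 1)) (K.projectionOnto E h (Pi.single v 1))
      = M u v := by
  rw [LinearMap.BilinForm.apply_projectionOnto_projectionOnto h
    (hE.trans hM.ker_toLin'_le_ker_toBilin') (hE.trans (M.ker_toLin'_le_ker_toBilin'_flip)),
    toBilin'_single]

theorem nonmain_cubic_bound_general {n : ℕ}
    (A : Matrix (Fin n) (Fin n) ℝ)
    (hsymm : A.IsSymm)
    (hentries : ∀ p q, A p q ∈ ({0, 1, -1} : Set ℝ))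
    (hdiag : ∀ p, A p p = 0)
    (μ : ℝ) (hμ : μ ∉ ({0, 1, -1} : Set ℝ))
    (hnonmain : ∀ v : Fin n → ℝ, A.mulVec v = μ • v → v ⬝ᵥ (fun _ => (1 : ℝ)) = 0)
    (k : ℕ) (hk : k = Module.finrank ℝ (Module.End.eigenspace (Matrix.toLin' A) μ))
    (hkn : k < n - 1)
    (t : ℕ) (ht : t = n - k) :
    n ≤ (t + 2).choose 3 - 1 := by
  set E := Module.End.eigenspace (toLin' A) μ
  obtain ⟨K, hEK⟩ := E.exists_isCompl
  have hK : finrank ℝ K = t := by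
    have := Submodule.finrank_add_eq_of_isCompl hEK
    rw [finrank_fin_fun] at this
    omega
  let M := A - μ • 1
  have hE : E ≤ LinearMap.ker (toLin' M) := fun e he => by
    simp [M, End.mem_eigenspace_iff.1 he]
  let ℓ := dotProductEquiv ℝ (Fin n) (fun _ => 1)
  have hℓ : E ≤ LinearMap.ker ℓ := fun e he => by
    simpa [ℓ, dotProduct_comm] using hnonmain e (End.mem_eigenspace_iff.1 he)
  let x (u : Fin n) : K := K.projectionOnto E hEK.symm (Pi.single u 1)
  have := add_one_le_choose_finrank_of_gram (V := K) (by omega) hsymm hentries hdiag hμ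
    ((toBilin' M).restrict K) (ℓ.domRestrict K) x (fun u v => ?_) (fun u => ?_)
  · rw [hK] at this
    omega
  · rw [LinearMap.BilinForm.restrict_apply, LinearMap.domRestrict_apply,
      (hsymm.sub (isSymm_one.smul μ)).toBilin'_projectionOnto_single hEK.symm hE]
    simp [one_apply]
  · rw [LinearMap.domRestrict_apply, K.apply_projectionOnto_of_le_ker hEK.symm hℓ]
    simp [ℓ]

theorem nonmain_cubic_bound {n : ℕ}
    (A : Matrix (Fin n) (Fin n) ℝ)
    (hsymm : A.IsSymm)
    (hentries : ∀ p q, A p q ∈ ({0, 1, -1} : Set ℝ))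
    (hdiag : ∀ p, A p p = 0)
    (μ : ℝ) (hμ : μ ∉ ({0, 1, -1} : Set ℝ))
    (heig : Module.End.HasEigenvalue (Matrix.toLin' A) μ)
    (hnonmain : ∀ v : Fin n → ℝ, A.mulVec v = μ • v → v ⬝ᵥ (fun _ => (1 : ℝ)) = 0)
    (k : ℕ) (hk : k = Module.finrank ℝ (Module.End.eigenspace (Matrix.toLin' A) μ))
    (hkn : k < n - 1)
    (t : ℕ) (ht : t = n - k) :
    n ≤ (t + 2).choose 3 - 1 :=
  nonmain_cubic_bound_general A hsymm hentries hdiag μ hμ hnonmain k hk hkn t ht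
end

section
/- Let Σ be a signed graph on n vertices switching equivalent to a net-regular signed graph Σ' with net-degree ϱ, and let μ ∉ {0,1,−1,ϱ} be an eigenvalue of Σ with multiplicity k. If t = n − k ≥ 2, then n ≤ C(t+2,3) − 1. -/
/-!
Put `M = A' - μ • 1`. Switching conjugates `A - μ • 1` into `M`, so `rank M = n - k = t`. The
range of `M` contains every row of `M` (as `M` is symmetric) and the all-ones vector (as the rows
sum to `ϱ - μ ≠ 0`). On this `t`-dimensional space the `n + 1` cubic forms `x ↦ x_u ^ 3` and
`x ↦ (∑ u, x_u) ^ 3` are linearly independent, while powers of linear forms span a space of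
dimension at most `(t + 2).choose 3`.

For the independence, evaluate a vanishing combination at rows of `M` and at the all-ones vector.
Off-diagonal entries satisfy `x ^ 3 = x` and the diagonal entry `-μ` does not, which forces all
coefficients `c_u` to be equal. If they are nonzero, the rows of `M` have a constant Gram matrix,
so they all coincide, which is impossible since diagonal and off-diagonal entries differ.
-/

open Matrix Finset

section PowerForms

variable {K W : Type*} [Field K] [AddCommGroup W] [Module K W]

def powerForm (d : ℕ) (ℓ : Module.Dual K W) : MultilinearMap K (fun _ : Fin d => W) K :=
  (MultilinearMap.mkPiAlgebra K (Fin d) K).compLinearMap fun _ => ℓ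

@[simp]
theorem powerForm_apply (d : ℕ) (ℓ : Module.Dual K W) (x : Fin d → W) :
    powerForm d ℓ x = ∏ i, ℓ (x i) :=
  rfl

theorem card_le_choose_of_linearIndependent_powerForm [FiniteDimensional K W]
    {ι : Type*} [Fintype ι] {d : ℕ} {ℓ : ι → Module.Dual K W}
    (h : LinearIndependent K fun j => powerForm d (ℓ j)) :
    Fintype.card ι ≤ (Module.finrank K W + d - 1).choose d := by
  let b := Module.finBasis K W
  -- `F j s` is the value of `powerForm d (ℓ j)` on the basis vectors indexed by the multiset `s`
  let F : ι → Sym (Fin (Module.finrank K W)) d → K := fun j s =>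
    (s.1.map fun i => ℓ j (b i)).prod
  have hF : LinearIndependent K F := by
    rw [Fintype.linearIndependent_iff] at h ⊢
    intro g hg
    refine h g (Module.Basis.ext_multilinear (fun _ => b) fun σ => ?_)
    have hgσ := congrFun hg
    simp only [Finset.sum_apply, Pi.smul_apply, smul_eq_mul, Pi.zero_apply] at hgσ
    simpa [F, Finset.prod_eq_multiset_prod, Function.comp_def] using
      hgσ ⟨univ.val.map σ, by simp⟩
  simpa [Module.finrank_pi, Sym.card_sym_eq_choose] using hF.fintype_card_le_finrank

end PowerForms

theorem Matrix.IsSymm.row_mem_range_mulVecLin {K V : Type*} [CommSemiring K] [Fintype V]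
    {M : Matrix V V K} (hM : M.IsSymm) (v : V) : M v ∈ LinearMap.range M.mulVecLin := by
  classical
  exact ⟨Pi.single v 1, by ext u; simp [hM.apply v u]⟩

theorem Matrix.one_mem_range_mulVecLin {K V : Type*} [Field K] [Fintype V]
    {M : Matrix V V K} {a : K} (hrow : ∀ u, ∑ v, M u v = a) (ha : a ≠ 0) :
    (1 : V → K) ∈ LinearMap.range M.mulVecLin :=
  ⟨fun _ => a⁻¹, by ext u; simp [mulVec, dotProduct, ← Finset.sum_mul, hrow u, ha]⟩

theorem eq_of_forall_dotProduct_eq {R V n : Type*} [CommRing R] [LinearOrder R]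
    [IsStrictOrderedRing R] [Fintype n] {f : V → n → R} {κ : R}
    (h : ∀ v v', f v ⬝ᵥ f v' = κ) (v v' : V) : f v = f v' := by
  have : (f v - f v') ⬝ᵥ (f v - f v') = 0 := by
    simp only [sub_dotProduct, dotProduct_sub, h]
    ring
  exact sub_eq_zero.mp (dotProduct_self_eq_zero.mp this)

section CubicVanishing

variable {V : Type*} [Fintype V] {M : Matrix V V ℝ} {θ : ℝ}

theorem sum_mul_pow_three_row (hdiag : ∀ v, M v v = θ)
    (hoff : ∀ u v, u ≠ v → M u v ^ 3 = M u v) (c : V → ℝ) (v : V) :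
    ∑ u, c u * M v u ^ 3 = ∑ u, c u * M v u + c v * (θ ^ 3 - θ) := by
  have : ∑ u, (c u * M v u ^ 3 - c u * M v u) = c v * (θ ^ 3 - θ) := by
    rw [Finset.sum_eq_single v (fun u _ hu => by rw [hoff v u hu.symm, sub_self]) (by simp),
      hdiag]
    ring
  rw [Finset.sum_sub_distrib] at this
  linarith

theorem cubic_coeffs_eq_zero_of_vanishing_on_range [Nontrivial V] (hM : M.IsSymm)
    (hθ : θ ^ 3 ≠ θ) (hdiag : ∀ v, M v v = θ)
    (hoff : ∀ u v, u ≠ v → M u v ^ 3 = M u v)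
    {a : ℝ} (hrow : ∀ u, ∑ v, M u v = a) (ha : a ≠ 0) (c : V → ℝ) (c₀ : ℝ)
    (h : ∀ x ∈ LinearMap.range M.mulVecLin, ∀ y ∈ LinearMap.range M.mulVecLin,
      ∀ z ∈ LinearMap.range M.mulVecLin,
        ∑ u, c u * (x u * y u * z u) + c₀ * ((∑ u, x u) * (∑ u, y u) * (∑ u, z u)) = 0) :
    c = 0 ∧ c₀ = 0 := by
  have hn : (Fintype.card V : ℝ) ≠ 0 := by simp
  have hone := one_mem_range_mulVecLin hrow ha
  have hrowR := hM.row_mem_range_mulVecLin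
  obtain ⟨γ, hγ⟩ : ∃ γ, ∀ v, c v = γ := by
    refine ⟨c₀ * (a * Fintype.card V ^ 2 - a ^ 3) / (θ ^ 3 - θ), fun v => ?_⟩
    have E2 := h _ (hrowR v) 1 hone 1 hone
    have E3 := h _ (hrowR v) _ (hrowR v) _ (hrowR v)
    have := sum_mul_pow_three_row hdiag hoff c v
    simp only [Pi.one_apply, mul_one, hrow, Finset.sum_const, Finset.card_univ, nsmul_eq_mul,
      ← pow_three'] at E2 E3
    rw [eq_div_iff (sub_ne_zero.mpr hθ)]
    linear_combination E3 - E2 - this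
  by_cases hγ0 : γ = 0
  · have hc : c = 0 := funext fun v => (hγ v).trans hγ0
    have E1 := h 1 hone 1 hone 1 hone
    simp only [hc, Pi.zero_apply, Finset.sum_const_zero, Pi.one_apply, Finset.sum_const,
      Finset.card_univ, nsmul_eq_mul, mul_one, zero_add, mul_eq_zero, hn, or_false] at E1
    exact ⟨hc, E1⟩
  · have hgram : ∀ v v', M v ⬝ᵥ M v' = -(c₀ * a ^ 2 * Fintype.card V) / γ := by
      intro v v'
      have E4 := h _ (hrowR v) _ (hrowR v') 1 hone
      simp only [hγ, Pi.one_apply, mul_one, hrow, Finset.sum_const, Finset.card_univ,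
        nsmul_eq_mul, ← Finset.mul_sum] at E4
      rw [eq_div_iff hγ0, dotProduct]
      linear_combination E4
    obtain ⟨v, v', hvv'⟩ := exists_pair_ne V
    have hcol := congrFun (eq_of_forall_dotProduct_eq hgram v v') v
    rw [hdiag v] at hcol
    exact absurd (hcol ▸ hoff v' v hvv'.symm) hθ

end CubicVanishing

theorem Matrix.card_add_one_le_choose_rank {V : Type*} [Fintype V] [Nontrivial V]
    {M : Matrix V V ℝ} {θ a : ℝ} (hM : M.IsSymm) (hθ : θ ^ 3 ≠ θ)
    (hdiag : ∀ v, M v v = θ) (hoff : ∀ u v, u ≠ v → M u v ^ 3 = M u v)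
    (hrow : ∀ u, ∑ v, M u v = a) (ha : a ≠ 0) :
    Fintype.card V + 1 ≤ (M.rank + 2).choose 3 := by
  set R := LinearMap.range M.mulVecLin
  let ℓ : Option V → Module.Dual ℝ R := fun j =>
    (j.elim (∑ u, LinearMap.proj u) LinearMap.proj).comp R.subtype
  have hind : LinearIndependent ℝ fun j => powerForm 3 (ℓ j) := by
    rw [Fintype.linearIndependent_iff]
    intro g hg
    obtain ⟨hsome, hnone⟩ :=
      cubic_coeffs_eq_zero_of_vanishing_on_range hM hθ hdiag hoff hrow ha (g ∘ some) (g none)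
        fun x hx y hy z hz => by
          have := congrArg (fun f => f ![⟨x, hx⟩, ⟨y, hy⟩, ⟨z, hz⟩]) hg
          simpa [Fintype.sum_option, Fin.prod_univ_three, ℓ, add_comm] using this
    rintro (_ | u)
    · exact hnone
    · exact congrFun hsome u
  simpa [Matrix.rank] using card_le_choose_of_linearIndependent_powerForm hind

theorem Matrix.rank_sub_smul_one_add_finrank_eigenspace_s13 {K n : Type*} [Field K] [Fintype n]
    [DecidableEq n] (A : Matrix n n K) (μ : K) :
    (A - μ • 1).rank + Module.finrank K (Module.End.eigenspace (toLin' A) μ) =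
      Fintype.card n := by
  rw [Module.End.eigenspace_def, Module.End.one_eq_id, ← Matrix.toLin'_one, ← map_smul,
    ← map_sub, Matrix.rank, Matrix.toLin'_apply', LinearMap.finrank_range_add_finrank_ker,
    Module.finrank_fintype_fun_eq_card]

theorem Matrix.rank_mul_mul_sub_smul_one {K n : Type*} [Field K] [Fintype n]
    [DecidableEq n] {D : Matrix n n K} (hD : D * D = 1) (A : Matrix n n K) (μ : K) :
    (D * A * D - μ • 1).rank = (A - μ • 1).rank := by
  have hdet := isUnit_det_of_left_inverse hD
  have hconj : D * A * D - μ • 1 = D * (A - μ • 1) * D := by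
    rw [mul_sub, sub_mul, mul_smul_comm, smul_mul_assoc, mul_one, hD]
  rw [hconj, rank_mul_eq_left_of_isUnit_det D _ hdet, rank_mul_eq_right_of_isUnit_det D _ hdet]

theorem card_add_one_le_choose_rank_sub_smul_one {V : Type*} [Fintype V] [DecidableEq V]
    [Nontrivial V] {A : Matrix V V ℝ} {ϱ μ : ℝ} (hsymm : A.IsSymm)
    (hentries : ∀ p q, A p q ∈ ({0, 1, -1} : Set ℝ)) (hdiag : ∀ p, A p p = 0)
    (hnetreg : ∀ i, ∑ j, A i j = ϱ) (hμ : μ ∉ ({0, 1, -1, ϱ} : Set ℝ)) :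
    Fintype.card V + 1 ≤ ((A - μ • 1).rank + 2).choose 3 := by
  simp only [Set.mem_insert_iff, Set.mem_singleton_iff, not_or] at hμ
  obtain ⟨hμ0, hμ1, hμm1, hμϱ⟩ := hμ
  refine Matrix.card_add_one_le_choose_rank (θ := -μ) (hsymm.sub (isSymm_one.smul μ)) ?_ ?_ ?_
    (fun u => ?_) (sub_ne_zero.mpr (Ne.symm hμϱ))
  · intro h
    have : μ * (μ - 1) * (μ + 1) = 0 := by linear_combination -h
    simp only [mul_eq_zero, sub_eq_zero, add_eq_zero_iff_eq_neg] at this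
    tauto
  · intro v
    simp [hdiag]
  · intro u v huv
    obtain h | h | h : A u v = 0 ∨ A u v = 1 ∨ A u v = -1 := hentries u v <;>
      norm_num [one_apply_ne huv, h]
  · simp [Finset.sum_sub_distrib, hnetreg, one_apply]

theorem switching_equivalent_net_regular_bound_general {n : ℕ}
    (A A' : Matrix (Fin n) (Fin n) ℝ)
    (hsymm' : A'.IsSymm)
    (hentries' : ∀ p q, A' p q ∈ ({0, 1, -1} : Set ℝ))
    (hdiag' : ∀ p, A' p p = 0)
    (d : Fin n → ℝ) (hd : ∀ i, d i = 1 ∨ d i = -1)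
    (hswitch : A' = Matrix.diagonal d * A * Matrix.diagonal d)
    (ϱ : ℝ) (hnetreg : ∀ i, (∑ j, A' i j) = ϱ)
    (μ : ℝ) (hμ : μ ∉ ({0, 1, -1, ϱ} : Set ℝ))
    (k : ℕ) (hk : k = Module.finrank ℝ (Module.End.eigenspace (Matrix.toLin' A) μ))
    (t : ℕ) (ht : t = n - k) (ht2 : 2 ≤ t) :
    n ≤ (t + 2).choose 3 - 1 := by
  have hD : diagonal d * diagonal d = 1 := by
    rw [diagonal_mul_diagonal, ← diagonal_one]
    congr 1
    ext i
    rcases hd i with h | h <;> simp [h]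
  have hrank : (A' - μ • 1).rank = t := by
    have := A.rank_sub_smul_one_add_finrank_eigenspace_s13 μ
    rw [hswitch, rank_mul_mul_sub_smul_one hD]
    simp only [Fintype.card_fin] at this
    omega
  have : Nontrivial (Fin n) := Fin.nontrivial_iff_two_le.mpr (by omega)
  have hbound := card_add_one_le_choose_rank_sub_smul_one hsymm' hentries' hdiag' hnetreg hμ
  rw [hrank, Fintype.card_fin] at hbound
  omega

theorem switching_equivalent_net_regular_bound {n : ℕ}
    (A A' : Matrix (Fin n) (Fin n) ℝ)
    (hsymm : A.IsSymm)
    (hentries : ∀ p q, A p q ∈ ({0, 1, -1} : Set ℝ))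
    (hdiag : ∀ p, A p p = 0)
    (hsymm' : A'.IsSymm)
    (hentries' : ∀ p q, A' p q ∈ ({0, 1, -1} : Set ℝ))
    (hdiag' : ∀ p, A' p p = 0)
    (d : Fin n → ℝ) (hd : ∀ i, d i = 1 ∨ d i = -1)
    (hswitch : A' = Matrix.diagonal d * A * Matrix.diagonal d)
    (ϱ : ℝ) (hnetreg : ∀ i, (∑ j, A' i j) = ϱ)
    (μ : ℝ) (hμ : μ ∉ ({0, 1, -1, ϱ} : Set ℝ))
    (heig : Module.End.HasEigenvalue (Matrix.toLin' A) μ)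
    (k : ℕ) (hk : k = Module.finrank ℝ (Module.End.eigenspace (Matrix.toLin' A) μ))
    (t : ℕ) (ht : t = n - k) (ht2 : 2 ≤ t) :
    n ≤ (t + 2).choose 3 - 1 :=
  switching_equivalent_net_regular_bound_general A A' hsymm' hentries' hdiag' d hd hswitch ϱ hnetreg
    μ hμ k hk t ht ht2
end

section
/- Let Σ be a signed graph with n vertices, let μ ∉ {0,1,−1} be an eigenvalue of Σ with multiplicity k, and let t = n − k. If −μ² is not an eigenvalue of the underlying graph G of Σ, then n ≤ C(t+1, 2). -/
/-!
Put `B = A - μ • 1`; its kernel is the `μ`-eigenspace, so `B` has rank `t`. Because `A` has zero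
diagonal and entries `0, ±1`, the Hadamard square `B ⊙ B` is `A_G + μ² • 1`, which is nonsingular
since `-μ²` is not an eigenvalue of `A_G`. Every column of `B ⊙ B` is the square of a column of
`B`, so it lies in `V * V` for the column space `V` of `B`; that space is spanned by the products
`eᵢ * eⱼ` of pairs from a basis of `V`, hence `n ≤ C(t+1, 2)`.
-/

open Matrix Module Pointwise

namespace Submodule

variable {K A : Type*} [Field K] [CommRing A] [Algebra K A]

theorem finrank_span_mul_span_le {ι : Type*} [Fintype ι] (e : ι → A) :
    finrank K ↥(span K (Set.range e) * span K (Set.range e)) ≤ (Fintype.card ι + 1).choose 2 := by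
  let prod : Sym2 ι → A := Sym2.lift ⟨fun i j => e i * e j, fun _ _ => mul_comm _ _⟩
  have hprod : Set.range e * Set.range e ⊆ Set.range prod := by
    rintro _ ⟨_, ⟨i, rfl⟩, _, ⟨j, rfl⟩, rfl⟩
    exact ⟨s(i, j), rfl⟩
  have := Module.Finite.span_of_finite K (Set.finite_range prod)
  calc _ ≤ finrank K (span K (Set.range prod)) := by
        rw [span_mul_span]
        exact finrank_mono (span_mono hprod)
    _ ≤ Fintype.card (Sym2 ι) := finrank_range_le_card prod
    _ = (Fintype.card ι + 1).choose 2 := Sym2.card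

theorem finrank_mul_self_le (V : Submodule K A) [FiniteDimensional K V] :
    finrank K ↥(V * V) ≤ (finrank K V + 1).choose 2 := by
  let b := Module.finBasis K V
  have hV : span K (Set.range fun i => (b i : A)) = V := by
    rw [Set.range_comp', ← V.coe_subtype, span_image, b.span_eq, map_subtype_top]
  have := finrank_span_mul_span_le (K := K) fun i => (b i : A)
  rwa [hV, Fintype.card_fin] at this

end Submodule

namespace Matrix

variable {K : Type*} [Field K]

theorem rank_hadamard_self_le {m n : Type*} [Fintype m] [Fintype n] (B : Matrix m n K) :
    (B ⊙ B).rank ≤ (B.rank + 1).choose 2 := by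
  rw [rank_eq_finrank_span_cols, rank_eq_finrank_span_cols]
  have hcols : Submodule.span K (Set.range (B ⊙ B).col) ≤
      Submodule.span K (Set.range B.col) * Submodule.span K (Set.range B.col) := by
    refine Submodule.span_le.mpr ?_
    rintro _ ⟨j, rfl⟩
    exact Submodule.mul_mem_mul (Submodule.subset_span ⟨j, rfl⟩) (Submodule.subset_span ⟨j, rfl⟩)
  exact (Submodule.finrank_mono hcols).trans (Submodule.finrank_mul_self_le _)

variable {n : Type*} [Fintype n] [DecidableEq n]

theorem rank_sub_smul_one_add_finrank_eigenspace_s15 (M : Matrix n n K) (μ : K) :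
    (M - μ • 1).rank + finrank K (End.eigenspace (toLin' M) μ) = Fintype.card n := by
  have hlin : toLin' (M - μ • 1) = toLin' M - μ • 1 := by
    rw [map_sub, map_smul, toLin'_one, End.one_eq_id]
  rw [End.eigenspace_def, rank, ← toLin'_apply', hlin, LinearMap.finrank_range_add_finrank_ker,
    finrank_fintype_fun_eq_card]

theorem rank_add_smul_one_of_not_hasEigenvalue (M : Matrix n n K) (c : K)
    (h : ¬ End.HasEigenvalue (toLin' M) (-c)) : (M + c • 1).rank = Fintype.card n := by
  have := rank_sub_smul_one_add_finrank_eigenspace_s15 M (-c)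
  rw [End.hasEigenvalue_iff, not_not] at h
  rwa [h, finrank_bot, add_zero, neg_smul, sub_neg_eq_add] at this

end Matrix

theorem Matrix.hadamard_self_sub_smul_one {R n : Type*} [CommRing R] [DecidableEq n]
    {M : Matrix n n R} (hM : ∀ i, M i i = 0) (c : R) :
    (M - c • 1) ⊙ (M - c • 1) = M ⊙ M + c ^ 2 • 1 := by
  ext i j
  by_cases hij : i = j
  · subst hij
    simp [hM, sq]
  · simp [hij]

theorem Matrix.hadamard_self_eq_abs {R m n : Type*} [Ring R] [LinearOrder R] [IsOrderedRing R]
    {M : Matrix m n R} (hM : ∀ i j, M i j ∈ ({0, 1, -1} : Set R)) :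
    M ⊙ M = fun i j => |M i j| := by
  ext i j
  obtain h | h | h : M i j = 0 ∨ M i j = 1 ∨ M i j = -1 := hM i j <;> simp [h]

theorem quadratic_bound_on_order_general {n : ℕ}
    (A : Matrix (Fin n) (Fin n) ℝ)
    (hentries : ∀ p q, A p q ∈ ({0, 1, -1} : Set ℝ))
    (hdiag : ∀ p, A p p = 0)
    (AG : Matrix (Fin n) (Fin n) ℝ) (hAG : AG = fun i j => |A i j|)
    (μ : ℝ)
    (hG : ¬ Module.End.HasEigenvalue (Matrix.toLin' AG) (-μ ^ 2))
    (k : ℕ) (hk : k = Module.finrank ℝ (Module.End.eigenspace (Matrix.toLin' A) μ))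
    (t : ℕ) (ht : t = n - k) :
    n ≤ (t + 1).choose 2 := by
  have hrank : (A - μ • 1).rank = t := by
    have := rank_sub_smul_one_add_finrank_eigenspace_s15 A μ
    rw [Fintype.card_fin] at this
    omega
  have hsq : (A - μ • 1) ⊙ (A - μ • 1) = AG + μ ^ 2 • 1 := by
    rw [hadamard_self_sub_smul_one hdiag, hadamard_self_eq_abs hentries, hAG]
  calc n = ((A - μ • 1) ⊙ (A - μ • 1)).rank := by
        rw [hsq, rank_add_smul_one_of_not_hasEigenvalue AG _ hG, Fintype.card_fin]
    _ ≤ (t + 1).choose 2 := hrank ▸ rank_hadamard_self_le _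

theorem quadratic_bound_on_order {n : ℕ}
    (A : Matrix (Fin n) (Fin n) ℝ)
    (hsymm : A.IsSymm)
    (hentries : ∀ p q, A p q ∈ ({0, 1, -1} : Set ℝ))
    (hdiag : ∀ p, A p p = 0)
    (AG : Matrix (Fin n) (Fin n) ℝ) (hAG : AG = fun i j => |A i j|)
    (μ : ℝ) (hμ : μ ∉ ({0, 1, -1} : Set ℝ))
    (heig : Module.End.HasEigenvalue (Matrix.toLin' A) μ)
    (hG : ¬ Module.End.HasEigenvalue (Matrix.toLin' AG) (-μ ^ 2))
    (k : ℕ) (hk : k = Module.finrank ℝ (Module.End.eigenspace (Matrix.toLin' A) μ))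
    (t : ℕ) (ht : t = n - k) :
    n ≤ (t + 1).choose 2 :=
  quadratic_bound_on_order_general A hentries hdiag AG hAG μ hG k hk t ht
end
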